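/- arXiv:1805.04266 — 8 statements merged into one kernel-verified Lean document; each statement's English description precedes it below -/
import Mathlib

section
/- For every customer type c_i ∈ 𝒞 and every finite list (c^1,…,c^L) of customer types (L ≥ 0), the following identity holds: ∏_{ℓ=1}^{L} 1/μ_{S({c^1,…,c^ℓ})} = Σ_{ℓ=0}^{L} ( ∏_{j=1}^{ℓ} 1/μ_{S({c^1,…,c^j})} ) · ( 1/μ_{S({c_i,c^1,…,c^ℓ})} ) · ( ∏_{j=ℓ+1}^{L} 1/μ_{S({c_i,c^1,…,c^j})} ) · μ_{S(c_i) ∖ S({c^1,…,c^ℓ})}. -/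
open Finset

/-- Sum of service rates over a finite set of server types. -/
def muS {S : Type*} (mu : S → ℝ) (B : Finset S) : ℝ := ∑ s ∈ B, mu s

/-- The set of server types compatible with customer type `c`. -/
def Sc {C S : Type*} [Fintype S] (R : C → S → Prop) [∀ c s, Decidable (R c s)]
    (c : C) : Finset S := Finset.univ.filter fun s => R c s

/-- The set of server types compatible with at least one customer type in the list `w`. -/
def SsetL {C S : Type*} [Fintype S] (R : C → S → Prop) [∀ c s, Decidable (R c s)]
    (w : List C) : Finset S := Finset.univ.filter fun s => ∃ c ∈ w, R c s

/-
Write `M l = μ_{S(c^1,…,c^l)}` and `M' l = μ_{S(c_i,c^1,…,c^l)}`, so that the last factor of the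
`l`-th summand is `M' l - M l`. With `T l = ∏_{j<l} 1/M (j+1) · ∏_{l≤j<L} 1/M' (j+1)`, dividing by
`M' l` extends the second product down to `j = l - 1` and multiplying by `M l` shortens the first
one to `j < l - 1`, so the `l`-th summand is `T l - T (l-1)` for `l ≥ 1` and `T 0` for `l = 0`
(as `M 0 = 0`). The sum telescopes to `T L`, which is the left-hand side.
-/

section Telescoping

variable {K : Type*} [Field K] (M M' : ℕ → K) (L : ℕ)

def mixedProd (l : ℕ) : K :=
  (∏ j ∈ range l, 1 / M (j + 1)) * ∏ j ∈ Ico l L, 1 / M' (j + 1)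

variable {M M' L}

lemma summand_zero_eq_mixedProd (hM0 : M 0 = 0) (hM'0 : M' 0 ≠ 0) :
    (∏ j ∈ range 0, 1 / M (j + 1)) * (1 / M' 0) * (∏ j ∈ Ico 0 L, 1 / M' (j + 1)) *
      (M' 0 - M 0) = mixedProd M M' L 0 := by
  rw [mixedProd, hM0, sub_zero]
  field_simp

lemma summand_succ_eq_sub {k : ℕ} (hk : k < L) (hM : M (k + 1) ≠ 0) (hM' : M' (k + 1) ≠ 0) :
    (∏ j ∈ range (k + 1), 1 / M (j + 1)) * (1 / M' (k + 1)) *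
        (∏ j ∈ Ico (k + 1) L, 1 / M' (j + 1)) * (M' (k + 1) - M (k + 1)) =
      mixedProd M M' L (k + 1) - mixedProd M M' L k := by
  rw [mixedProd, mixedProd, prod_range_succ, prod_eq_prod_Ico_succ_bot hk]
  field_simp

theorem prod_one_div_eq_sum_telescoping (hM0 : M 0 = 0) (hM : ∀ l < L, M (l + 1) ≠ 0)
    (hM' : ∀ l ≤ L, M' l ≠ 0) :
    ∏ l ∈ range L, 1 / M (l + 1) =
      ∑ l ∈ range (L + 1), (∏ j ∈ range l, 1 / M (j + 1)) * (1 / M' l) *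
        (∏ j ∈ Ico l L, 1 / M' (j + 1)) * (M' l - M l) := by
  rw [sum_range_succ', summand_zero_eq_mixedProd hM0 (hM' 0 L.zero_le),
    sum_congr rfl fun k hk => summand_succ_eq_sub (mem_range.1 hk) (hM k (mem_range.1 hk))
      (hM' (k + 1) (mem_range.1 hk)), sum_range_sub, sub_add_cancel, mixedProd, Ico_self,
    prod_empty, mul_one]

end Telescoping

section ServerSets

variable {C S : Type*} [Fintype S] (R : C → S → Prop) [∀ c s, Decidable (R c s)]

lemma SsetL_nil : SsetL R ([] : List C) = ∅ := by
  simp [SsetL]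

lemma Sc_subset_SsetL {c : C} {w : List C} (hc : c ∈ w) : Sc R c ⊆ SsetL R w := by
  intro s hs
  simp only [Sc, SsetL, mem_filter, mem_univ, true_and] at hs ⊢
  exact ⟨c, hc, hs⟩

lemma SsetL_cons [DecidableEq S] (c : C) (w : List C) :
    SsetL R (c :: w) = Sc R c ∪ SsetL R w := by
  ext s
  simp [SsetL, Sc]

lemma SsetL_nonempty (hScne : ∀ c : C, (Sc R c).Nonempty) {w : List C} (hw : w ≠ []) :
    (SsetL R w).Nonempty := by
  obtain ⟨c, hc⟩ := List.exists_mem_of_ne_nil w hw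
  exact (hScne c).mono (Sc_subset_SsetL R hc)

end ServerSets

lemma muS_pos {S : Type*} {mu : S → ℝ} (hmu : ∀ s, 0 < mu s) {B : Finset S} (hB : B.Nonempty) :
    0 < muS mu B :=
  sum_pos (fun s _ => hmu s) hB

lemma muS_sdiff_eq_muS_union_sub {S : Type*} [DecidableEq S] (mu : S → ℝ) (A B : Finset S) :
    muS mu (A \ B) = muS mu (A ∪ B) - muS mu B := by
  rw [muS, muS, muS, ← union_sdiff_right, sum_sdiff_eq_sub subset_union_right]

theorem stmt0_general {C S : Type*} [Fintype S]
    [DecidableEq S]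
    (R : C → S → Prop) [∀ c s, Decidable (R c s)]
    (mu : S → ℝ) (hmu : ∀ s, 0 < mu s)
    (hScne : ∀ c : C, (Sc R c).Nonempty)
    (ci : C) (w : List C) :
    (∏ l ∈ Finset.range w.length, (1 : ℝ) / muS mu (SsetL R (w.take (l + 1)))) =
      ∑ l ∈ Finset.range (w.length + 1),
        (∏ j ∈ Finset.range l, (1 : ℝ) / muS mu (SsetL R (w.take (j + 1)))) *
          (1 / muS mu (SsetL R (ci :: w.take l))) *
          (∏ j ∈ Finset.Ico l w.length, (1 : ℝ) / muS mu (SsetL R (ci :: w.take (j + 1)))) *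
          muS mu (Sc R ci \ SsetL R (w.take l)) := by
  simp only [muS_sdiff_eq_muS_union_sub, ← SsetL_cons]
  refine prod_one_div_eq_sum_telescoping (M := fun l => muS mu (SsetL R (w.take l)))
    (M' := fun l => muS mu (SsetL R (ci :: w.take l))) ?_ (fun l hl => ?_) (fun l _ => ?_)
  · simp [SsetL_nil, muS]
  · refine (muS_pos hmu (SsetL_nonempty R hScne ?_)).ne'
    rw [← List.length_pos_iff, List.length_take]
    omega
  · exact (muS_pos hmu (SsetL_nonempty R hScne (List.cons_ne_nil _ _))).ne'

/-- the product identity used in the partial-balance proof (balance of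
customer arrivals with service completions), for a fixed customer type `ci` and a
finite list `w = (c^1, …, c^L)` of customer types. -/
theorem stmt0 {C S : Type*} [Fintype C] [Fintype S] [Nonempty C] [Nonempty S]
    [DecidableEq S]
    (R : C → S → Prop) [∀ c s, Decidable (R c s)]
    (mu : S → ℝ) (hmu : ∀ s, 0 < mu s)
    (hScne : ∀ c : C, (Sc R c).Nonempty)
    (ci : C) (w : List C) :
    (∏ l ∈ Finset.range w.length, (1 : ℝ) / muS mu (SsetL R (w.take (l + 1)))) =
      ∑ l ∈ Finset.range (w.length + 1),
        (∏ j ∈ Finset.range l, (1 : ℝ) / muS mu (SsetL R (w.take (j + 1)))) *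
          (1 / muS mu (SsetL R (ci :: w.take l))) *
          (∏ j ∈ Finset.Ico l w.length, (1 : ℝ) / muS mu (SsetL R (ci :: w.take (j + 1)))) *
          muS mu (Sc R ci \ SsetL R (w.take l)) :=
  stmt0_general R mu hmu hScne ci w
end

section
/- For every server type s_j ∈ 𝒮 and every finite list (s^1,…,s^K) of server types (K ≥ 0), the following identity holds: ∏_{k=1}^{K} 1/λ_{C({s^1,…,s^k})} = Σ_{k=0}^{K} ( ∏_{i=1}^{k} 1/λ_{C({s^1,…,s^i})} ) · ( 1/λ_{C({s_j,s^1,…,s^k})} ) · ( ∏_{i=k+1}^{K} 1/λ_{C({s_j,s^1,…,s^i})} ) · λ_{C(s_j) ∖ C({s^1,…,s^k})}. -/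
open Finset

/-- Sum of arrival rates over a finite set of customer types. -/
def lamC {C : Type*} (lam : C → ℝ) (A : Finset C) : ℝ := ∑ c ∈ A, lam c

/-- The set of customer types compatible with server type `s`. -/
def Cc {C S : Type*} [Fintype C] (R : C → S → Prop) [∀ c s, Decidable (R c s)]
    (s : S) : Finset C := Finset.univ.filter fun c => R c s

/-- The set of customer types compatible with at least one server type in the list `v`. -/
def CsetL {C S : Type*} [Fintype C] (R : C → S → Prop) [∀ c s, Decidable (R c s)]
    (v : List S) : Finset C := Finset.univ.filter fun c => ∃ s ∈ v, R c s

section Aux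

variable {C S : Type*} [Fintype C] [DecidableEq C]
variable (R : C → S → Prop) [∀ c s, Decidable (R c s)]

lemma CsetL_nil : CsetL R ([] : List S) = ∅ := by
  ext c; simp [CsetL]

lemma CsetL_cons (s : S) (v : List S) :
    CsetL R (s :: v) = Cc R s ∪ CsetL R v := by
  ext c; simp [CsetL, Cc]

lemma CsetL_nonempty (hCcne : ∀ s : S, (Cc R s).Nonempty)
    {w : List S} (hw : w ≠ []) : (CsetL R w).Nonempty := by
  cases w with
  | nil => exact absurd rfl hw
  | cons s t =>
      obtain ⟨c, hc⟩ := hCcne s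
      exact ⟨c, by rw [CsetL_cons]; exact Finset.mem_union_left _ hc⟩

lemma lamC_pos (lam : C → ℝ) (hlam : ∀ c, 0 < lam c) {A : Finset C} (hA : A.Nonempty) :
    0 < lamC lam A := Finset.sum_pos (fun c _ => hlam c) hA

lemma lamC_diff (lam : C → ℝ) (sj : S) (w : List S) :
    lamC lam (Cc R sj \ CsetL R w)
      = lamC lam (CsetL R (sj :: w)) - lamC lam (CsetL R w) := by
  have h : CsetL R (sj :: w) = CsetL R w ∪ (Cc R sj \ CsetL R w) := by
    rw [CsetL_cons]; ext c; simp; tauto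
  rw [h]
  unfold lamC
  rw [Finset.sum_union Finset.disjoint_sdiff]
  ring

end Aux

/-- the product identity used in the partial-balance proof (balance of
service completions with arrivals matching idle servers), for a fixed server type `sj`
and a finite list `v = (s^1, …, s^K)` of server types. -/
theorem stmt1 {C S : Type*} [Fintype C] [Fintype S] [Nonempty C] [Nonempty S]
    [DecidableEq C]
    (R : C → S → Prop) [∀ c s, Decidable (R c s)]
    (lam : C → ℝ) (hlam : ∀ c, 0 < lam c)
    (hCcne : ∀ s : S, (Cc R s).Nonempty)
    (sj : S) (v : List S) :
    (∏ k ∈ Finset.range v.length, (1 : ℝ) / lamC lam (CsetL R (v.take (k + 1)))) =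
      ∑ k ∈ Finset.range (v.length + 1),
        (∏ i ∈ Finset.range k, (1 : ℝ) / lamC lam (CsetL R (v.take (i + 1)))) *
          (1 / lamC lam (CsetL R (sj :: v.take k))) *
          (∏ i ∈ Finset.Ico k v.length, (1 : ℝ) / lamC lam (CsetL R (sj :: v.take (i + 1)))) *
          lamC lam (Cc R sj \ CsetL R (v.take k)) := by
  set K := v.length with hK
  -- telescoping function
  set f : ℕ → ℝ := fun k =>
    match k with
    | 0 => 0
    | (k + 1) => (∏ i ∈ Finset.range k, (1 : ℝ) / lamC lam (CsetL R (v.take (i + 1)))) *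
        (∏ i ∈ Finset.Ico k K, (1 : ℝ) / lamC lam (CsetL R (sj :: v.take (i + 1)))) with hf
  have hpos' : ∀ w : List S, 0 < lamC lam (CsetL R (sj :: w)) := by
    intro w
    exact lamC_pos lam hlam (CsetL_nonempty R hCcne (by simp))
  have key : ∀ k ∈ Finset.range (K + 1),
      (∏ i ∈ Finset.range k, (1 : ℝ) / lamC lam (CsetL R (v.take (i + 1)))) *
          (1 / lamC lam (CsetL R (sj :: v.take k))) *
          (∏ i ∈ Finset.Ico k K, (1 : ℝ) / lamC lam (CsetL R (sj :: v.take (i + 1)))) *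
          lamC lam (Cc R sj \ CsetL R (v.take k)) = f (k + 1) - f k := by
    intro k hk
    rw [Finset.mem_range] at hk
    have hkK : k ≤ K := Nat.lt_succ_iff.mp hk
    rw [lamC_diff]
    have htake : ∀ m : ℕ, m + 1 ≤ K → 0 < lamC lam (CsetL R (v.take (m + 1))) := by
      intro m hm
      apply lamC_pos lam hlam
      apply CsetL_nonempty R hCcne
      apply List.ne_nil_of_length_pos
      rw [List.length_take]
      omega
    cases k with
    | zero =>
        have hL' := hpos' (v.take 0)
        have h0 : lamC lam (∅ : Finset C) = 0 := by simp [lamC]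
        simp only [hf, List.take_zero, CsetL_nil, h0, Finset.range_zero,
          Finset.prod_empty, one_mul, sub_zero]
        have hc : lamC lam (CsetL R (sj :: ([] : List S))) *
            (1 / lamC lam (CsetL R (sj :: ([] : List S)))) = 1 :=
          mul_one_div_cancel hL'.ne'
        linear_combination (∏ i ∈ Finset.Ico 0 K,
          (1 : ℝ) / lamC lam (CsetL R (sj :: v.take (i + 1)))) * hc
    | succ k =>
        have hk1K : k + 1 ≤ K := hkK
        have hkK' : k < K := hk1K
        have hL : 0 < lamC lam (CsetL R (v.take (k + 1))) := htake k hk1K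
        have hL' := hpos' (v.take (k + 1))
        have hPs : 0 < ∏ i ∈ Finset.range k, lamC lam (CsetL R (v.take (i + 1))) :=
          Finset.prod_pos fun i hi => htake i (by rw [Finset.mem_range] at hi; omega)
        have hQs : 0 < ∏ i ∈ Finset.Ico (k + 1) K, lamC lam (CsetL R (sj :: v.take (i + 1))) :=
          Finset.prod_pos fun i _ => hpos' _
        have hQ : (∏ i ∈ Finset.Ico k K, (1 : ℝ) / lamC lam (CsetL R (sj :: v.take (i + 1))))
            = (1 / lamC lam (CsetL R (sj :: v.take (k + 1)))) *
              ∏ i ∈ Finset.Ico (k + 1) K, (1 : ℝ) / lamC lam (CsetL R (sj :: v.take (i + 1))) :=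
          Finset.prod_eq_prod_Ico_succ_bot hkK' _
        simp only [hf]
        rw [Finset.prod_range_succ, hQ]
        field_simp [hL.ne', hL'.ne', hPs.ne', hQs.ne']
  rw [Finset.sum_congr rfl key, Finset.sum_range_sub f]
  simp [hf]
end

section
/- The series Σ over all finite lists w = (c^1,…,c^L) of customer types (including the empty list) of ∏_{ℓ=1}^{L} λ_{c^ℓ}/μ_{S({c^1,…,c^ℓ})} converges (is finite) if and only if the stability condition holds, i.e. if and only if λ_A < μ_{S(A)} for every nonempty A ⊆ 𝒞. -/
open Finset

/-- The set of server types compatible with at least one customer type in `A`. -/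
def SsetF {C S : Type*} [Fintype S] (R : C → S → Prop) [∀ c s, Decidable (R c s)]
    (A : Finset C) : Finset S := Finset.univ.filter fun s => ∃ c ∈ A, R c s

/-- The unnormalized stationary weight of a list of customer types:
`qweight R lam mu pre (c^1,…,c^L) = ∏_{ℓ=1}^{L} lam (c^ℓ) / μ_{S(pre ∪ {c^1,…,c^ℓ})}`;
with `pre = []` this is `∏_{ℓ=1}^{L} λ_{c^ℓ} / μ_{S({c^1,…,c^ℓ})}`. -/
noncomputable def qweight {C S : Type*} [Fintype S] (R : C → S → Prop) [∀ c s, Decidable (R c s)]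
    (lam : C → ℝ) (mu : S → ℝ) : List C → List C → ℝ
  | _, [] => 1
  | pre, c :: w =>
      (lam c / muS mu (SsetL R (pre ++ [c]))) * qweight R lam mu (pre ++ [c]) w

/-!
Let `F A` be the total weight of the continuations of a word whose set of customer types is `A`,
and `load A = λ_A / μ_{S(A)}`. Splitting off the first letter gives
`F A = 1 + load A * F A + ∑ c ∉ A, λ_c / μ_{S(A ∪ {c})} * F (A ∪ {c})`. If every load is below `1`,
this triangular system has a nonnegative solution, and it bounds the partial sums of the series
grouped by word length. Conversely, a word with letters in `A` only has weight at least
`∏ λ_{c^ℓ} / μ_{S(A)}`, so the words of length `n` weigh at least `load A ^ n` in total, and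
convergence forces `load A < 1`.
-/

theorem List.summable_iff_summable_sum_ofFn {α : Type*} [Fintype α] {f : List α → ℝ}
    (hf : 0 ≤ f) : Summable f ↔ Summable fun n => ∑ g : Fin n → α, f (List.ofFn g) := by
  rw [← List.equivSigmaTuple.symm.summable_iff, summable_sigma_of_nonneg (f := f ∘ _) fun _ => hf _]
  simp [Summable.of_finite]

lemma muS_mono {S : Type*} {mu : S → ℝ} (hmu : ∀ s, 0 ≤ mu s) {B B' : Finset S} (h : B ⊆ B') :
    muS mu B ≤ muS mu B' :=
  sum_le_sum_of_subset_of_nonneg h fun s _ _ => hmu s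

section

variable {C S : Type*} [Fintype S] (R : C → S → Prop) [∀ c s, Decidable (R c s)]
  (lam : C → ℝ) (mu : S → ℝ)

noncomputable def load (A : Finset C) : ℝ := (∑ c ∈ A, lam c) / muS mu (SsetF R A)

noncomputable def qweightLengthSum [Fintype C] (n : ℕ) (pre : List C) : ℝ :=
  ∑ g : Fin n → C, qweight R lam mu pre (List.ofFn g)

/-- The solution, by downward recursion on `A`, of
`F A = 1 + load A * F A + ∑ c ∉ A, lam c / μ_{S(A ∪ {c})} * F (A ∪ {c})`,
the equation satisfied by the total weight of the continuations of a word whose set of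
customer types is `A`. -/
noncomputable def weightBound [Fintype C] [DecidableEq C] (A : Finset C) : ℝ :=
  (1 + ∑ c ∈ Aᶜ.attach, lam c / muS mu (SsetF R (insert c.1 A)) * weightBound (insert c.1 A)) /
    (1 - load R lam mu A)
termination_by Aᶜ.card
decreasing_by
  rw [Finset.compl_insert]
  exact Finset.card_erase_lt_of_mem c.2

variable {R lam mu}

lemma SsetF_mono {A B : Finset C} (h : A ⊆ B) : SsetF R A ⊆ SsetF R B := by
  intro s hs
  simp only [SsetF, mem_filter, mem_univ, true_and] at hs ⊢
  obtain ⟨c, hc, hcs⟩ := hs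
  exact ⟨c, h hc, hcs⟩

lemma SsetL_append_singleton [DecidableEq C] (pre : List C) (c : C) :
    SsetL R (pre ++ [c]) = SsetF R (insert c pre.toFinset) := by
  ext s
  simp [SsetL, SsetF, or_comm]

lemma muS_SsetF_pos (hmu : ∀ s, 0 < mu s) (hScne : ∀ c : C, (univ.filter fun s => R c s).Nonempty)
    {A : Finset C} (hA : A.Nonempty) : 0 < muS mu (SsetF R A) := by
  obtain ⟨c, hc⟩ := hA
  obtain ⟨s, hs⟩ := hScne c
  refine sum_pos (fun s _ => hmu s) ⟨s, ?_⟩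
  simp only [SsetF, mem_filter, mem_univ, true_and] at hs ⊢
  exact ⟨c, hc, hs⟩

lemma load_nonneg (hlam : ∀ c, 0 ≤ lam c) (hmu : ∀ s, 0 ≤ mu s) (A : Finset C) :
    0 ≤ load R lam mu A :=
  div_nonneg (sum_nonneg fun c _ => hlam c) (sum_nonneg fun s _ => hmu s)

lemma qweight_nonneg (hlam : ∀ c, 0 ≤ lam c) (hmu : ∀ s, 0 ≤ mu s) (pre w : List C) :
    0 ≤ qweight R lam mu pre w := by
  induction w generalizing pre with
  | nil => exact zero_le_one
  | cons c w ih =>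
    exact mul_nonneg (div_nonneg (hlam c) (sum_nonneg fun s _ => hmu s)) (ih _)

section Finite

variable [Fintype C]

lemma qweightLengthSum_zero (pre : List C) : qweightLengthSum R lam mu 0 pre = 1 := by
  simp [qweightLengthSum, qweight]

lemma qweightLengthSum_succ (n : ℕ) (pre : List C) :
    qweightLengthSum R lam mu (n + 1) pre =
      ∑ c, lam c / muS mu (SsetL R (pre ++ [c])) * qweightLengthSum R lam mu n (pre ++ [c]) := by
  rw [qweightLengthSum, ← (Fin.consEquiv fun _ => C).sum_comp, Fintype.sum_prod_type]
  simp only [qweightLengthSum, mul_sum]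
  refine sum_congr rfl fun c _ => sum_congr rfl fun g _ => ?_
  simp only [List.ofFn_succ]
  rfl

lemma qweightLengthSum_nonneg (hlam : ∀ c, 0 ≤ lam c) (hmu : ∀ s, 0 ≤ mu s) (n : ℕ)
    (pre : List C) : 0 ≤ qweightLengthSum R lam mu n pre :=
  sum_nonneg fun _ _ => qweight_nonneg hlam hmu _ _

lemma sum_range_qweightLengthSum_le [DecidableEq C] (hlam : ∀ c, 0 ≤ lam c)
    (hmu : ∀ s, 0 ≤ mu s) {M : Finset C → ℝ} (hM0 : ∀ A, 0 ≤ M A)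
    (hM : ∀ A, 1 + ∑ c, lam c / muS mu (SsetF R (insert c A)) * M (insert c A) ≤ M A)
    (N : ℕ) (pre : List C) : ∑ n ∈ range N, qweightLengthSum R lam mu n pre ≤ M pre.toFinset := by
  induction N generalizing pre with
  | zero => simpa using hM0 _
  | succ N ih =>
    calc ∑ n ∈ range (N + 1), qweightLengthSum R lam mu n pre
        = 1 + ∑ c, lam c / muS mu (SsetF R (insert c pre.toFinset)) *
            ∑ n ∈ range N, qweightLengthSum R lam mu n (pre ++ [c]) := by
          simp only [sum_range_succ', qweightLengthSum_succ, qweightLengthSum_zero,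
            SsetL_append_singleton, mul_sum]
          rw [sum_comm, add_comm]
      _ ≤ 1 + ∑ c, lam c / muS mu (SsetF R (insert c pre.toFinset)) *
            M (insert c pre.toFinset) := by
          gcongr with c
          · exact div_nonneg (hlam c) (sum_nonneg fun s _ => hmu s)
          · simpa using ih (pre ++ [c])
      _ ≤ M pre.toFinset := hM _

lemma weightBound_nonneg [DecidableEq C] (hlam : ∀ c, 0 ≤ lam c) (hmu : ∀ s, 0 ≤ mu s)
    (hload : ∀ A, load R lam mu A < 1) (A : Finset C) : 0 ≤ weightBound R lam mu A := by
  induction A using weightBound.induct with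
  | case1 A ih =>
    rw [weightBound]
    refine div_nonneg (add_nonneg zero_le_one (sum_nonneg fun c _ => ?_))
      (sub_nonneg.2 (hload A).le)
    exact mul_nonneg (div_nonneg (hlam c) (sum_nonneg fun s _ => hmu s)) (ih c)

lemma one_add_sum_weightBound [DecidableEq C] (hload : ∀ A, load R lam mu A < 1)
    (A : Finset C) :
    1 + ∑ c, lam c / muS mu (SsetF R (insert c A)) * weightBound R lam mu (insert c A) =
      weightBound R lam mu A := by
  set T := ∑ c ∈ Aᶜ.attach,
    lam c / muS mu (SsetF R (insert c.1 A)) * weightBound R lam mu (insert c.1 A)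
  have hfix : weightBound R lam mu A * (1 - load R lam mu A) = 1 + T := by
    rw [weightBound, div_mul_cancel₀ _ (sub_pos.2 (hload A)).ne']
  have hin : ∑ c ∈ A, lam c / muS mu (SsetF R (insert c A)) * weightBound R lam mu (insert c A) =
      load R lam mu A * weightBound R lam mu A := by
    rw [load, sum_div, sum_mul]
    exact sum_congr rfl fun c hc => by rw [insert_eq_of_mem hc]
  rw [← sum_add_sum_compl A, hin, ← sum_attach Aᶜ]
  linarith

lemma summable_qweight_of_load_lt_one [DecidableEq C] (hlam : ∀ c, 0 ≤ lam c)
    (hmu : ∀ s, 0 ≤ mu s) (hload : ∀ A, load R lam mu A < 1) :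
    Summable (qweight R lam mu []) := by
  rw [List.summable_iff_summable_sum_ofFn (qweight_nonneg hlam hmu [])]
  exact summable_of_sum_range_le (qweightLengthSum_nonneg hlam hmu · [])
    (sum_range_qweightLengthSum_le hlam hmu (weightBound_nonneg hlam hmu hload)
      (fun A => (one_add_sum_weightBound hload A).le) · [])

lemma pow_load_le_qweightLengthSum [DecidableEq C] (hlam : ∀ c, 0 ≤ lam c)
    (hmu : ∀ s, 0 < mu s) (hScne : ∀ c : C, (univ.filter fun s => R c s).Nonempty)
    (A : Finset C) (n : ℕ) {pre : List C} (hpre : ∀ c ∈ pre, c ∈ A) :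
    load R lam mu A ^ n ≤ qweightLengthSum R lam mu n pre := by
  induction n generalizing pre with
  | zero => simp [qweightLengthSum_zero]
  | succ n ih =>
    have hstep : ∀ c ∈ A, lam c / muS mu (SsetF R A) * load R lam mu A ^ n ≤
        lam c / muS mu (SsetL R (pre ++ [c])) * qweightLengthSum R lam mu n (pre ++ [c]) := by
      intro c hc
      have hsub : insert c pre.toFinset ⊆ A :=
        insert_subset hc fun d hd => hpre d (List.mem_toFinset.1 hd)
      rw [SsetL_append_singleton]
      exact mul_le_mul
        (div_le_div_of_nonneg_left (hlam c) (muS_SsetF_pos hmu hScne (insert_nonempty c _))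
          (muS_mono (fun s => (hmu s).le) (SsetF_mono hsub)))
        (ih (by simpa [or_imp, forall_and, hc] using hpre))
        (pow_nonneg (load_nonneg hlam (fun s => (hmu s).le) A) n)
        (div_nonneg (hlam c) (sum_nonneg fun s _ => (hmu s).le))
    calc load R lam mu A ^ (n + 1) = ∑ c ∈ A, lam c / muS mu (SsetF R A) * load R lam mu A ^ n := by
          rw [pow_succ', load, sum_div, sum_mul]
      _ ≤ ∑ c ∈ A, lam c / muS mu (SsetL R (pre ++ [c])) *
            qweightLengthSum R lam mu n (pre ++ [c]) := sum_le_sum hstep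
      _ ≤ qweightLengthSum R lam mu (n + 1) pre := by
          rw [qweightLengthSum_succ]
          exact sum_le_univ_sum_of_nonneg fun c => mul_nonneg
            (div_nonneg (hlam c) (sum_nonneg fun s _ => (hmu s).le))
            (qweightLengthSum_nonneg hlam (fun s => (hmu s).le) n _)

lemma load_lt_one_of_summable_qweight (hlam : ∀ c, 0 ≤ lam c) (hmu : ∀ s, 0 < mu s)
    (hScne : ∀ c : C, (univ.filter fun s => R c s).Nonempty)
    (h : Summable (qweight R lam mu [])) (A : Finset C) : load R lam mu A < 1 := by
  classical
  have hmu' : ∀ s, 0 ≤ mu s := fun s => (hmu s).le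
  rw [List.summable_iff_summable_sum_ofFn (qweight_nonneg hlam hmu' [])] at h
  have hgeom : Summable fun n => load R lam mu A ^ n :=
    h.of_nonneg_of_le (fun n => pow_nonneg (load_nonneg hlam hmu' A) n)
      fun n => pow_load_le_qweightLengthSum hlam hmu hScne A n (by simp)
  exact (le_abs_self _).trans_lt (summable_geometric_iff_norm_lt_one.1 hgeom)

end Finite

lemma stable_iff_forall_load_lt_one (hmu : ∀ s, 0 < mu s)
    (hScne : ∀ c : C, (univ.filter fun s => R c s).Nonempty) :
    (∀ A : Finset C, A.Nonempty → (∑ c ∈ A, lam c) < muS mu (SsetF R A)) ↔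
      ∀ A, load R lam mu A < 1 := by
  refine forall_congr' fun A => ?_
  rcases A.eq_empty_or_nonempty with rfl | hA
  · simp [load]
  · simp only [hA, forall_const, load, div_lt_one (muS_SsetF_pos hmu hScne hA)]

end

theorem stmt2_general {C S : Type*} [Fintype C] [Fintype S]
    (R : C → S → Prop) [∀ c s, Decidable (R c s)]
    (lam : C → ℝ) (mu : S → ℝ)
    (hlam : ∀ c, 0 < lam c) (hmu : ∀ s, 0 < mu s)
    (hScne : ∀ c : C, (Finset.univ.filter fun s => R c s).Nonempty) :
    Summable (fun w : List C => qweight R lam mu [] w) ↔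
      ∀ A : Finset C, A.Nonempty → (∑ c ∈ A, lam c) < muS mu (SsetF R A) := by
  classical
  have hlam' : ∀ c, 0 ≤ lam c := fun c => (hlam c).le
  have hmu' : ∀ s, 0 ≤ mu s := fun s => (hmu s).le
  rw [stable_iff_forall_load_lt_one hmu hScne]
  exact ⟨load_lt_one_of_summable_qweight hlam' hmu hScne,
    summable_qweight_of_load_lt_one hlam' hmu'⟩

/-- the series of the unnormalized weights over all finite lists of
customer types is summable if and only if the stability condition
`λ_A < μ_{S(A)}` holds for every nonempty `A ⊆ 𝒞`. -/
theorem stmt2 {C S : Type*} [Fintype C] [Fintype S] [Nonempty C] [Nonempty S]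
    (R : C → S → Prop) [∀ c s, Decidable (R c s)]
    (lam : C → ℝ) (mu : S → ℝ)
    (hlam : ∀ c, 0 < lam c) (hmu : ∀ s, 0 < mu s)
    (hScne : ∀ c : C, (Finset.univ.filter fun s => R c s).Nonempty) :
    Summable (fun w : List C => qweight R lam mu [] w) ↔
      ∀ A : Finset C, A.Nonempty → (∑ c ∈ A, lam c) < muS mu (SsetF R A) :=
  stmt2_general R lam mu hlam hmu hScne
end

section
/- For every finite list (c^1,…,c^L) of customer types and every position 1 ≤ ℓ ≤ L, the set of server types s ∈ 𝒮 whose earliest compatible entry in the list is at position ℓ (i.e. s ∈ S(c^ℓ) and s ∉ S(c^j) for every j < ℓ) equals S(c^ℓ) ∖ S({c^1,…,c^{ℓ−1}}); consequently the total rate Σ of μ_s over these server types equals μ_{S(c^ℓ) ∖ S({c^1,…,c^{ℓ−1}})}. Hence in the FCFS matching queue (where an arriving server removes the first compatible customer in the queue) the total arrival rate of server types that remove the ℓth customer equals μ_{S(c^ℓ) ∖ S({c^1,…,c^{ℓ−1}})}, which is exactly the total service rate received by the ℓth customer in the redundancy service system (where the ℓth customer is served simultaneously by all servers in S(c^ℓ)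 ∖ S({c^1,…,c^{ℓ−1}})); so the two systems have identical state transition rates on the space of ordered lists of customer types. -/
open Finset

/-- for a list `w` of customer types and a (0-based) position `l < w.length`,
the server types whose earliest compatible entry of `w` is at position `l` are exactly
`S(c^l) \ S({c^0,…,c^{l-1}})`, and consequently their total rate is
`μ_{S(c^l) \ S({c^0,…,c^{l-1}})}`: the total arrival rate of server types that remove the
`l`-th customer in the FCFS matching queue, which is exactly the total service rate received
by the `l`-th customer in the redundancy service system, so the two systems have identical
transition rates on ordered lists of customer types. -/
theorem stmt3 {C S : Type*} [Fintype C] [Fintype S] [Nonempty S] [Inhabited C]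
    [DecidableEq S]
    (R : C → S → Prop) [∀ c s, Decidable (R c s)]
    (mu : S → ℝ) (hmu : ∀ s, 0 < mu s)
    (w : List C) (l : ℕ) (hl : l < w.length) :
    (Finset.univ.filter fun s =>
        R (w.getD l default) s ∧ ∀ j ∈ Finset.range l, ¬ R (w.getD j default) s)
        = Sc R (w.getD l default) \ SsetL R (w.take l) ∧
    (∑ s ∈ Finset.univ.filter (fun s =>
        R (w.getD l default) s ∧ ∀ j ∈ Finset.range l, ¬ R (w.getD j default) s), mu s)
        = muS mu (Sc R (w.getD l default) \ SsetL R (w.take l)) := by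
  have key : (Finset.univ.filter fun s =>
        R (w.getD l default) s ∧ ∀ j ∈ Finset.range l, ¬ R (w.getD j default) s)
        = Sc R (w.getD l default) \ SsetL R (w.take l) := by
    ext s
    simp only [Finset.mem_filter, Finset.mem_univ, true_and, Sc, SsetL, Finset.mem_sdiff,
      Finset.mem_range]
    constructor
    · rintro ⟨h1, h2⟩
      refine ⟨h1, fun ⟨c, hc, hRc⟩ => ?_⟩
      rw [List.mem_take_iff_getElem] at hc
      obtain ⟨j, hj, rfl⟩ := hc
      have hjl : j < l := lt_of_lt_of_le hj (min_le_left _ _)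
      exact h2 j hjl (by rwa [List.getD_eq_getElem?_getD, List.getElem?_eq_getElem
        (lt_of_lt_of_le hj (min_le_right _ _)), Option.getD_some])
    · rintro ⟨h1, h2⟩
      refine ⟨h1, fun j hj hR => h2 ⟨w.getD j default, ?_, hR⟩⟩
      have hjw : j < w.length := lt_trans hj hl
      rw [List.getD_eq_getElem?_getD, List.getElem?_eq_getElem hjw, Option.getD_some]
      rw [List.mem_take_iff_getElem]
      exact ⟨j, by omega, rfl⟩
  exact ⟨key, by rw [key]; rfl⟩
end

section
/- Let A = (z^1,…,z^M) be a word over 𝒞 ∪ 𝒮 whose FCFS directed matching leaves exactly K unmatched customer entries and L unmatched server entries. If c ∈ 𝒞 is a customer type, then the FCFS directed matching of the word (c, z^1,…,z^M) leaves either exactly K+1 unmatched customer entries and L unmatched server entries, or exactly K unmatched customer entries and L−1 unmatched server entries; in particular it leaves no more than K+1 unmatched customers and no more than L unmatched servers. -/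
/-- FCFS directed matching of a finite word, scanning left to right.
`fcfsAux R rest n q` processes the remaining word `rest`, where `n` is the position of
the first entry of `rest` in the whole word, and `q` is the ordered queue of
still-unmatched customer entries (position, type) seen so far.  A server entry is matched
to the earliest unmatched compatible customer before it, if any; the output is the list
of matched pairs of positions `(customer position, server position)`. -/
def fcfsAux {C S : Type*} (R : C → S → Prop) [∀ c s, Decidable (R c s)] :
    List (C ⊕ S) → ℕ → List (ℕ × C) → List (ℕ × ℕ)
  | [], _, _ => []
  | Sum.inl c :: rest, n, q => fcfsAux R rest (n + 1) (q ++ [(n, c)])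
  | Sum.inr s :: rest, n, q =>
      match q.find? (fun p => decide (R p.2 s)) with
      | some p => (p.1, n) :: fcfsAux R rest (n + 1) (q.eraseP (fun p' => decide (R p'.2 s)))
      | none => fcfsAux R rest (n + 1) q

/-- The matched pairs of positions of the FCFS directed matching of the word `w`. -/
def fcfsMatching {C S : Type*} (R : C → S → Prop) [∀ c s, Decidable (R c s)]
    (w : List (C ⊕ S)) : List (ℕ × ℕ) := fcfsAux R w 0 []

/-- Number of customer entries of a word. -/
def numC {C S : Type*} (w : List (C ⊕ S)) : ℕ := w.countP (fun z => z.isLeft)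

/-- Number of server entries of a word. -/
def numS {C S : Type*} (w : List (C ⊕ S)) : ℕ := w.countP (fun z => z.isRight)

/-- Number of customer entries left unmatched by the FCFS directed matching. -/
def unmatchedC {C S : Type*} (R : C → S → Prop) [∀ c s, Decidable (R c s)]
    (w : List (C ⊕ S)) : ℕ := numC w - (fcfsMatching R w).length

/-- Number of server entries left unmatched by the FCFS directed matching. -/
def unmatchedS {C S : Type*} (R : C → S → Prop) [∀ c s, Decidable (R c s)]
    (w : List (C ⊕ S)) : ℕ := numS w - (fcfsMatching R w).length

/-!
The number of FCFS matches depends only on the types of the waiting customers, so it can be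
computed from a queue of customer types. Prepending the customer `c` to the word is the same as
starting with `c` in the queue. An extra customer in the queue changes the number of matches by
at most one: at the first server where it makes a difference, it is either matched to a server
that would otherwise stay unmatched (after which the two runs coincide), or it takes the place
of a later compatible customer `y`, which then plays the role of the extra customer. Hence the
prepended word has `d ∈ {0, 1}` more matches, one more customer and the same servers, which
leaves `K + 1 - d` unmatched customers and `L - d` unmatched servers.
-/

section
variable {C S : Type*} (R : C → S → Prop) [∀ c s, Decidable (R c s)]

/-- The number of matches FCFS makes on the word `w`, starting from a queue `q` of waiting
customer types. -/
def fcfsMatchCount : List (C ⊕ S) → List C → ℕ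
  | [], _ => 0
  | Sum.inl c :: w, q => fcfsMatchCount w (q ++ [c])
  | Sum.inr s :: w, q =>
      if ∃ c ∈ q, R c s then fcfsMatchCount w (q.eraseP (R · s)) + 1
      else fcfsMatchCount w q

lemma fcfsMatchCount_cons_inr_of_exists {s : S} {w : List (C ⊕ S)} {q : List C}
    (h : ∃ c ∈ q, R c s) :
    fcfsMatchCount R (Sum.inr s :: w) q = fcfsMatchCount R w (q.eraseP (R · s)) + 1 :=
  if_pos h

lemma fcfsMatchCount_cons_inr_of_forall {s : S} {w : List (C ⊕ S)} {q : List C}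
    (h : ∀ c ∈ q, ¬R c s) :
    fcfsMatchCount R (Sum.inr s :: w) q = fcfsMatchCount R w q :=
  if_neg (by simpa using h)

lemma numC_cons_inl (c : C) (w : List (C ⊕ S)) : numC (Sum.inl c :: w) = numC w + 1 := by
  simp [numC, List.countP_cons]

lemma numC_cons_inr (s : S) (w : List (C ⊕ S)) : numC (Sum.inr s :: w) = numC w := by
  simp [numC]

lemma numS_cons_inl (c : C) (w : List (C ⊕ S)) : numS (Sum.inl c :: w) = numS w := by
  simp [numS]

lemma numS_cons_inr (s : S) (w : List (C ⊕ S)) : numS (Sum.inr s :: w) = numS w + 1 := by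
  simp [numS, List.countP_cons]

lemma length_fcfsAux (w : List (C ⊕ S)) (n : ℕ) (q : List (ℕ × C)) :
    (fcfsAux R w n q).length = fcfsMatchCount R w (q.map Prod.snd) := by
  induction w generalizing n q with
  | nil => rfl
  | cons z w ih =>
    rcases z with c | s
    · simp [fcfsAux, fcfsMatchCount, ih]
    · cases h : q.find? (fun p => decide (R p.2 s)) with
      | none =>
        have hq : ¬∃ c ∈ q.map Prod.snd, R c s := by
          rintro ⟨c, hc, hcs⟩
          obtain ⟨p, hp, rfl⟩ := List.mem_map.mp hc
          exact List.find?_eq_none.mp h p hp (by simpa using hcs)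
        simp only [fcfsAux, fcfsMatchCount, h, if_neg hq, ih]
      | some p =>
        have hq : ∃ c ∈ q.map Prod.snd, R c s :=
          ⟨p.2, List.mem_map_of_mem (List.mem_of_find?_eq_some h),
            by simpa using List.find?_some h⟩
        simp only [fcfsAux, fcfsMatchCount, h, if_pos hq, ih, List.length_cons, List.eraseP_map]
        rfl

lemma fcfsMatchCount_le_numS (w : List (C ⊕ S)) (q : List C) :
    fcfsMatchCount R w q ≤ numS w := by
  induction w generalizing q with
  | nil => simp [fcfsMatchCount]
  | cons z w ih =>
    rcases z with c | s
    · simpa [fcfsMatchCount, numS_cons_inl] using ih _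
    rw [numS_cons_inr]
    by_cases h : ∃ c ∈ q, R c s
    · rw [fcfsMatchCount_cons_inr_of_exists R h]
      exact Nat.succ_le_succ (ih _)
    · rw [fcfsMatchCount_cons_inr_of_forall R (by simpa using h)]
      exact (ih q).trans (Nat.le_succ _)

lemma fcfsMatchCount_le_numC_add_length (w : List (C ⊕ S)) (q : List C) :
    fcfsMatchCount R w q ≤ numC w + q.length := by
  induction w generalizing q with
  | nil => simp [fcfsMatchCount]
  | cons z w ih =>
    rcases z with c | s
    · have := ih (q ++ [c])
      simp only [List.length_append, List.length_singleton] at this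
      simp only [fcfsMatchCount, numC_cons_inl]
      omega
    rw [numC_cons_inr]
    by_cases h : ∃ c ∈ q, R c s
    · obtain ⟨c, hc, hcs⟩ := h
      have hlen := List.length_eraseP_of_mem (p := (R · s)) hc (by simpa using hcs)
      have hpos := List.length_pos_of_mem hc
      rw [fcfsMatchCount_cons_inr_of_exists R ⟨c, hc, hcs⟩]
      have := ih (q.eraseP (R · s))
      omega
    · rw [fcfsMatchCount_cons_inr_of_forall R (by simpa using h)]
      exact ih q

lemma fcfsMatchCount_cons_inr_insert {s : S} {w : List (C ⊕ S)}
    (ih : ∀ (q₁ q₂ : List C) (x : C),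
      fcfsMatchCount R w (q₁ ++ q₂) ≤ fcfsMatchCount R w (q₁ ++ x :: q₂) ∧
        fcfsMatchCount R w (q₁ ++ x :: q₂) ≤ fcfsMatchCount R w (q₁ ++ q₂) + 1)
    (q₁ q₂ : List C) (x : C) :
    fcfsMatchCount R (Sum.inr s :: w) (q₁ ++ q₂) ≤
        fcfsMatchCount R (Sum.inr s :: w) (q₁ ++ x :: q₂) ∧
      fcfsMatchCount R (Sum.inr s :: w) (q₁ ++ x :: q₂) ≤
        fcfsMatchCount R (Sum.inr s :: w) (q₁ ++ q₂) + 1 := by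
  by_cases h₁ : ∃ c ∈ q₁, R c s
  · obtain ⟨a, ha, has⟩ := h₁
    have hera (q : List C) : (q₁ ++ q).eraseP (R · s) = q₁.eraseP (R · s) ++ q :=
      List.eraseP_append_left (by simpa using has) q ha
    rw [fcfsMatchCount_cons_inr_of_exists R ⟨a, List.mem_append_left _ ha, has⟩,
      fcfsMatchCount_cons_inr_of_exists R ⟨a, List.mem_append_left _ ha, has⟩, hera, hera]
    have := ih (q₁.eraseP (R · s)) q₂ x
    omega
  push Not at h₁
  have hera (q : List C) : (q₁ ++ q).eraseP (R · s) = q₁ ++ q.eraseP (R · s) :=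
    List.eraseP_append_right q (by simpa using h₁)
  by_cases h₂ : ∃ c ∈ q₂, R c s
  · obtain ⟨y, hy, hys⟩ := h₂
    rw [fcfsMatchCount_cons_inr_of_exists R ⟨y, by simp [hy], hys⟩,
      fcfsMatchCount_cons_inr_of_exists R ⟨y, by simp [hy], hys⟩, hera, hera]
    by_cases hx : R x s
    · -- `x` is served instead of the first compatible `y` of `q₂`, which becomes the extra one
      obtain ⟨y, l₁, l₂, -, -, rfl, hq₂⟩ :=
        List.exists_of_eraseP (p := (R · s)) hy (by simpa using hys)
      have := ih (q₁ ++ l₁) l₂ y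
      rw [List.eraseP_cons_of_pos (p := (R · s)) (by simpa using hx), hq₂]
      simp only [List.append_assoc] at this
      omega
    · have := ih q₁ (q₂.eraseP (R · s)) x
      rw [List.eraseP_cons_of_neg (p := (R · s)) (by simpa using hx)]
      omega
  push Not at h₂
  rw [fcfsMatchCount_cons_inr_of_forall R (by simpa [or_imp, forall_and] using ⟨h₁, h₂⟩)]
  by_cases hx : R x s
  · rw [fcfsMatchCount_cons_inr_of_exists R ⟨x, by simp, hx⟩, hera,
      List.eraseP_cons_of_pos (by simpa using hx)]
    omega
  · have hnone : ∀ c ∈ q₁ ++ x :: q₂, ¬R c s := by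
      simpa [or_imp, forall_and] using ⟨h₁, hx, h₂⟩
    rw [fcfsMatchCount_cons_inr_of_forall R hnone]
    exact ih q₁ q₂ x

lemma fcfsMatchCount_insert (w : List (C ⊕ S)) (q₁ q₂ : List C) (x : C) :
    fcfsMatchCount R w (q₁ ++ q₂) ≤ fcfsMatchCount R w (q₁ ++ x :: q₂) ∧
      fcfsMatchCount R w (q₁ ++ x :: q₂) ≤ fcfsMatchCount R w (q₁ ++ q₂) + 1 := by
  induction w generalizing q₁ q₂ x with
  | nil => simp [fcfsMatchCount]
  | cons z w ih =>
    rcases z with c | s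
    · simpa [fcfsMatchCount] using ih q₁ (q₂ ++ [c]) x
    · exact fcfsMatchCount_cons_inr_insert R ih q₁ q₂ x

end

theorem stmt8_general {C S : Type*}
    (R : C → S → Prop) [∀ c s, Decidable (R c s)]
    (A : List (C ⊕ S)) (K L : ℕ)
    (hK : unmatchedC R A = K) (hL : unmatchedS R A = L) (c : C) :
    ((unmatchedC R (Sum.inl c :: A) = K + 1 ∧ unmatchedS R (Sum.inl c :: A) = L) ∨
      (unmatchedC R (Sum.inl c :: A) = K ∧ unmatchedS R (Sum.inl c :: A) + 1 = L)) ∧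
    unmatchedC R (Sum.inl c :: A) ≤ K + 1 ∧ unmatchedS R (Sum.inl c :: A) ≤ L := by
  subst hK hL
  have hA : (fcfsMatching R A).length = fcfsMatchCount R A [] := length_fcfsAux R A 0 []
  have hcA : (fcfsMatching R (Sum.inl c :: A)).length = fcfsMatchCount R A [c] :=
    length_fcfsAux R A 1 [(0, c)]
  have hinsert : fcfsMatchCount R A [] ≤ fcfsMatchCount R A [c] ∧
      fcfsMatchCount R A [c] ≤ fcfsMatchCount R A [] + 1 :=
    fcfsMatchCount_insert R A [] [] c
  have hS := fcfsMatchCount_le_numS R A [c]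
  have hC : fcfsMatchCount R A [] ≤ numC A := fcfsMatchCount_le_numC_add_length R A []
  simp only [unmatchedC, unmatchedS, numC_cons_inl, numS_cons_inl, hA, hcA]
  omega

/-- Monotonicity, prepending a customer: if the FCFS directed matching of
`A` leaves exactly `K` unmatched customers and `L` unmatched servers, then prepending a
customer entry `c` leaves either exactly `K+1` unmatched customers and `L` unmatched
servers, or exactly `K` unmatched customers and `L−1` unmatched servers; in particular no
more than `K+1` unmatched customers and no more than `L` unmatched servers. -/
theorem stmt8 {C S : Type*} [Fintype C] [Fintype S] [Nonempty C] [Nonempty S]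
    (R : C → S → Prop) [∀ c s, Decidable (R c s)]
    (A : List (C ⊕ S)) (K L : ℕ)
    (hK : unmatchedC R A = K) (hL : unmatchedS R A = L) (c : C) :
    ((unmatchedC R (Sum.inl c :: A) = K + 1 ∧ unmatchedS R (Sum.inl c :: A) = L) ∨
      (unmatchedC R (Sum.inl c :: A) = K ∧ unmatchedS R (Sum.inl c :: A) + 1 = L)) ∧
    unmatchedC R (Sum.inl c :: A) ≤ K + 1 ∧ unmatchedS R (Sum.inl c :: A) ≤ L :=
  stmt8_general R A K L hK hL c
end

section
/- (Subadditivity) Let A' = (z^1,…,z^m), A'' = (z^{m+1},…,z^M) and A = (z^1,…,z^M) be words over 𝒞 ∪ 𝒮. Let K', K'', K denote the numbers of unmatched customer entries and L', L'', L the numbers of unmatched server entries in the FCFS directed matchings of A', A'', A respectively. Then K ≤ K' + K'' and L ≤ L' + L''. -/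
/-!
Scanning `A' ++ A''` processes `A'` exactly as on its own and then processes `A''` starting
from the queue of customers that `A'` left unmatched instead of from the empty queue. The
number of matches is monotone in the starting queue for the sublist order on customer types,
because removing the first compatible customer preserves that order; hence `A' ++ A''` has at
least as many matched pairs as `A'` and `A''` together, and the unmatched counts are the entry
counts minus the number of matched pairs.
-/

namespace List

theorem any_comp_of_map_sublist {α β : Type*} {f : α → β} {l₁ l₂ : List α}
    (h : (l₁.map f).Sublist (l₂.map f)) {P : β → Bool} (h₁ : l₁.any (P ∘ f)) :
    l₂.any (P ∘ f) := by
  rw [← any_map] at h₁ ⊢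
  obtain ⟨x, hx, hPx⟩ := any_eq_true.mp h₁
  exact any_eq_true.mpr ⟨x, h.subset hx, hPx⟩

theorem length_eraseP_add_toNat_any {α : Type*} (P : α → Bool) (l : List α) :
    (l.eraseP P).length + (l.any P).toNat = l.length := by
  cases h : l.any P
  · simp [length_eraseP, h]
  · obtain ⟨x, hx, -⟩ := any_eq_true.mp h
    simp [length_eraseP, h, Nat.sub_add_cancel (length_pos_of_mem hx)]

end List

section

variable {C S : Type*} (R : C → S → Prop) [∀ c s, Decidable (R c s)]

def fcfsQueue : List (C ⊕ S) → ℕ → List (ℕ × C) → List (ℕ × C)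
  | [], _, q => q
  | Sum.inl c :: rest, n, q => fcfsQueue rest (n + 1) (q ++ [(n, c)])
  | Sum.inr s :: rest, n, q => fcfsQueue rest (n + 1) (q.eraseP fun p => decide (R p.2 s))

theorem fcfsAux_inr (s : S) (rest : List (C ⊕ S)) (n : ℕ) (q : List (ℕ × C)) :
    fcfsAux R (Sum.inr s :: rest) n q =
      ((q.find? fun p => decide (R p.2 s)).map fun p => (p.1, n)).toList ++
        fcfsAux R rest (n + 1) (q.eraseP fun p => decide (R p.2 s)) := by
  cases h : q.find? (fun p => decide (R p.2 s)) with
  | some p => simp [fcfsAux, h]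
  | none => simp [fcfsAux, h, List.eraseP_of_forall_not (List.find?_eq_none.mp h)]

theorem length_fcfsAux_inr (s : S) (rest : List (C ⊕ S)) (n : ℕ) (q : List (ℕ × C)) :
    (fcfsAux R (Sum.inr s :: rest) n q).length =
      (fcfsAux R rest (n + 1) (q.eraseP fun p => decide (R p.2 s))).length +
        (q.any fun p => decide (R p.2 s)).toNat := by
  rw [fcfsAux_inr, List.length_append, add_comm]
  cases h : q.find? (fun p => decide (R p.2 s)) with
  | some p =>
    simp [List.any_eq_true.mpr ⟨p, List.mem_of_find?_eq_some h, List.find?_some h⟩]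
  | none => simp [List.any_eq_false.mpr (List.find?_eq_none.mp h)]

theorem fcfsAux_append : ∀ (w w' : List (C ⊕ S)) (n : ℕ) (q : List (ℕ × C)),
    fcfsAux R (w ++ w') n q = fcfsAux R w n q ++ fcfsAux R w' (n + w.length) (fcfsQueue R w n q)
  | [], w', n, q => by simp [fcfsAux, fcfsQueue]
  | Sum.inl c :: rest, w', n, q => by
    simp only [List.cons_append, fcfsAux, fcfsQueue, fcfsAux_append rest, List.length_cons,
      add_assoc, add_comm 1]
  | Sum.inr s :: rest, w', n, q => by
    simp only [List.cons_append, fcfsAux_inr, fcfsQueue, fcfsAux_append rest, List.length_cons,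
      List.append_assoc, add_assoc, add_comm 1]

theorem length_fcfsAux_le_of_sublist : ∀ (w : List (C ⊕ S)) (n₁ n₂ : ℕ) (q₁ q₂ : List (ℕ × C)),
    (q₁.map Prod.snd).Sublist (q₂.map Prod.snd) →
      (fcfsAux R w n₁ q₁).length ≤ (fcfsAux R w n₂ q₂).length
  | [], _, _, _, _, _ => le_rfl
  | Sum.inl c :: rest, n₁, n₂, q₁, q₂, h =>
    length_fcfsAux_le_of_sublist rest _ _ _ _ (by simpa using h.append_right [c])
  | Sum.inr s :: rest, n₁, n₂, q₁, q₂, h => by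
    rw [length_fcfsAux_inr, length_fcfsAux_inr]
    refine add_le_add (length_fcfsAux_le_of_sublist rest _ _ _ _ ?_) ?_
    · simpa only [List.eraseP_map, Function.comp_def] using
        h.eraseP (p := fun c => decide (R c s))
    · exact Bool.toNat_le_toNat <| Bool.le_iff_imp.mpr <|
        List.any_comp_of_map_sublist h (P := fun c => decide (R c s))

theorem length_fcfsAux_le_numS : ∀ (w : List (C ⊕ S)) (n : ℕ) (q : List (ℕ × C)),
    (fcfsAux R w n q).length ≤ numS w
  | [], _, _ => le_rfl
  | Sum.inl c :: rest, n, q => by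
    simpa [fcfsAux, numS] using length_fcfsAux_le_numS rest (n + 1) (q ++ [(n, c)])
  | Sum.inr s :: rest, n, q => by
    have := length_fcfsAux_le_numS rest (n + 1) (q.eraseP fun p => decide (R p.2 s))
    simp only [numS, List.countP_cons] at this ⊢
    rw [length_fcfsAux_inr]
    simpa using add_le_add this (Bool.toNat_le _)

theorem length_fcfsAux_le_numC_add : ∀ (w : List (C ⊕ S)) (n : ℕ) (q : List (ℕ × C)),
    (fcfsAux R w n q).length ≤ numC w + q.length
  | [], _, _ => by simp [fcfsAux]
  | Sum.inl c :: rest, n, q => by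
    have := length_fcfsAux_le_numC_add rest (n + 1) (q ++ [(n, c)])
    simp only [fcfsAux, numC, List.countP_cons, List.length_append, List.length_singleton,
      Sum.isLeft_inl, if_true] at this ⊢
    omega
  | Sum.inr s :: rest, n, q => by
    have := length_fcfsAux_le_numC_add rest (n + 1) (q.eraseP fun p => decide (R p.2 s))
    simp only [numC, List.countP_cons] at this ⊢
    rw [length_fcfsAux_inr, ← List.length_eraseP_add_toNat_any (fun p => decide (R p.2 s)) q]
    omega

theorem numC_append (w w' : List (C ⊕ S)) : numC (w ++ w') = numC w + numC w' :=
  List.countP_append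

theorem numS_append (w w' : List (C ⊕ S)) : numS (w ++ w') = numS w + numS w' :=
  List.countP_append

theorem length_fcfsMatching_add_le (w w' : List (C ⊕ S)) :
    (fcfsMatching R w).length + (fcfsMatching R w').length ≤
      (fcfsMatching R (w ++ w')).length := by
  rw [fcfsMatching, fcfsMatching, fcfsMatching, fcfsAux_append, List.length_append]
  exact Nat.add_le_add_left (length_fcfsAux_le_of_sublist R w' _ _ _ _ (by simp)) _

theorem length_fcfsMatching_le_numC (w : List (C ⊕ S)) : (fcfsMatching R w).length ≤ numC w :=
  length_fcfsAux_le_numC_add R w 0 []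

theorem length_fcfsMatching_le_numS (w : List (C ⊕ S)) : (fcfsMatching R w).length ≤ numS w :=
  length_fcfsAux_le_numS R w 0 []

end

theorem stmt10_general {C S : Type*}
    (R : C → S → Prop) [∀ c s, Decidable (R c s)]
    (A' A'' : List (C ⊕ S)) :
    unmatchedC R (A' ++ A'') ≤ unmatchedC R A' + unmatchedC R A'' ∧
    unmatchedS R (A' ++ A'') ≤ unmatchedS R A' + unmatchedS R A'' := by
  have hmatch := length_fcfsMatching_add_le R A' A''
  have hC' := length_fcfsMatching_le_numC R A'
  have hC'' := length_fcfsMatching_le_numC R A''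
  have hS' := length_fcfsMatching_le_numS R A'
  have hS'' := length_fcfsMatching_le_numS R A''
  constructor
  · rw [unmatchedC, unmatchedC, unmatchedC, numC_append]
    omega
  · rw [unmatchedS, unmatchedS, unmatchedS, numS_append]
    omega

/-- Subadditivity: if the word `A` is the concatenation of `A'` and `A''`,
then the numbers of unmatched customers and of unmatched servers of the FCFS directed
matching of `A` are at most the sums of the corresponding numbers for `A'` and `A''`. -/
theorem stmt10 {C S : Type*} [Fintype C] [Fintype S] [Nonempty C] [Nonempty S]
    (R : C → S → Prop) [∀ c s, Decidable (R c s)]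
    (A' A'' : List (C ⊕ S)) :
    unmatchedC R (A' ++ A'') ≤ unmatchedC R A' + unmatchedC R A'' ∧
    unmatchedS R (A' ++ A'') ≤ unmatchedS R A' + unmatchedS R A'' :=
  stmt10_general R A' A''
end

section
/- Let (z^1,…,z^M) be a perfect block, and let (z̃^M,…,z̃^1) denote its exchange transformation followed by reversal (where the exchange transformation swaps the entries of each matched pair and fixes unmatched server entries). Then (z̃^M,…,z̃^1) is again a perfect block, and for any probability assignment p : 𝒞 ∪ 𝒮 → [0,1] the product probabilities are equal: ∏_{k=1}^{M} p(z^k) = ∏_{k=1}^{M} p(z̃^k). In particular, if the entries of a random block of length M are i.i.d. with P(entry = c) = α_c and P(entry = s) = β_s, then a perfect block and its exchanged-reversed block have the same probability, namely κ_M · ∏_{c∈𝒞} α_c^{#c} · ∏_{s∈𝒮} β_s^{#s} conditional on the block being a perfect block, where #c, #s count the entries of each type and κ_M depends only on M. -/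
/-- A word is a perfect block if its FCFS directed matching matches every customer
entry. -/
def IsPerfect {C S : Type*} (R : C → S → Prop) [∀ c s, Decidable (R c s)]
    (w : List (C ⊕ S)) : Prop := (fcfsMatching R w).length = numC w

/-- The exchange transformation: the entries of each matched pair of the FCFS directed
matching are swapped, and unmatched entries are unchanged. -/
def exchange {C S : Type*} (R : C → S → Prop) [∀ c s, Decidable (R c s)] [Inhabited C]
    (w : List (C ⊕ S)) : List (C ⊕ S) :=
  (List.range w.length).map fun k =>
    match (fcfsMatching R w).find? (fun p => p.1 == k) with
    | some p => w.getD p.2 (Sum.inl default)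
    | none =>
      match (fcfsMatching R w).find? (fun p => p.2 == k) with
      | some p => w.getD p.1 (Sum.inl default)
      | none => w.getD k (Sum.inl default)

/-!
Call a relation `N` on positions an FCFS matching of a word if it pairs compatible customers with
later servers injectively and no compatible customer `i` and server `j > i` are both still free
at time `j`: either `i` is matched to a server `≤ j` or `j` to a customer `≤ i`. By induction on
the server position there is at most one such relation, and the algorithm produces one.

This characterization is compatible with exchanging matched entries and reading the word
backwards: if every customer of `w` is matched, the mirror image of its matching satisfies it for
the exchanged reversed word, so that word is again a perfect block. The exchange only permutes
the positions, hence entry counts and product probabilities are unchanged.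
-/

theorem List.find?_beq_eq_some_of_nodup_map {α β : Type*} [BEq β] [LawfulBEq β] {f : α → β}
    {l : List α} (hl : (l.map f).Nodup) {a : α} (ha : a ∈ l) :
    l.find? (fun x => f x == f a) = some a := by
  obtain ⟨b, hb⟩ := Option.isSome_iff_exists.1
    (List.find?_isSome (p := fun x => f x == f a).2 ⟨a, ha, by simp⟩)
  rw [hb, List.inj_on_of_nodup_map hl (List.mem_of_find?_eq_some hb) ha
    (by simpa using List.find?_some hb)]

theorem List.Pairwise.fst_le_of_find?_eq_some {α : Type*} {q : List (ℕ × α)}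
    {P : ℕ × α → Bool} {p x : ℕ × α} (hq : q.Pairwise (·.1 < ·.1))
    (hfind : q.find? P = some p)
    (hx : x ∈ q) (hPx : P x) : p.1 ≤ x.1 := by
  obtain ⟨-, as, bs, rfl, has⟩ := List.find?_eq_some_iff_append.1 hfind
  rcases List.mem_append.1 hx with hx | hx
  · simpa [hPx] using has x hx
  · rcases List.mem_cons.1 hx with rfl | hx
    · exact le_rfl
    · exact ((List.pairwise_cons.1 (List.pairwise_append.1 hq).2.1).1 x hx).le

theorem List.Pairwise.mem_map_fst_eraseP {α : Type*} {q : List (ℕ × α)}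
    {P : ℕ × α → Bool} {p : ℕ × α} (hq : q.Pairwise (·.1 < ·.1))
    (hfind : q.find? P = some p)
    {i : ℕ} : i ∈ (q.eraseP P).map Prod.fst ↔ i ∈ q.map Prod.fst ∧ i ≠ p.1 := by
  obtain ⟨hp, as, bs, rfl, has⟩ := List.find?_eq_some_iff_append.1 hfind
  obtain ⟨-, hpbs, hasp⟩ := List.pairwise_append.1 hq
  have hlt : ∀ x ∈ as, x.1 < p.1 := fun x hx => hasp x hx p List.mem_cons_self
  have hgt : ∀ x ∈ bs, p.1 < x.1 := (List.pairwise_cons.1 hpbs).1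
  rw [List.eraseP_append_right _ (by simpa using has), List.eraseP_cons_of_pos hp]
  simp only [List.map_append, List.map_cons, List.mem_append, List.mem_cons, List.mem_map]
  constructor
  · rintro (⟨x, hx, rfl⟩ | ⟨x, hx, rfl⟩)
    · exact ⟨.inl ⟨x, hx, rfl⟩, (hlt x hx).ne⟩
    · exact ⟨.inr (.inr ⟨x, hx, rfl⟩), (hgt x hx).ne'⟩
  · rintro ⟨hx | rfl | hx, hne⟩
    exacts [.inl hx, absurd rfl hne, .inr hx]

theorem List.map_getD_range {α : Type*} (l : List α) (d : α) :
    (List.range l.length).map (l.getD · d) = l :=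
  List.ext_getElem (by simp) fun k _ hk => by simp [List.getElem?_eq_getElem hk]

section Pairing

structure IsPairing (F : List (ℕ × ℕ)) : Prop where
  nodup_fst : (F.map Prod.fst).Nodup
  nodup_snd : (F.map Prod.snd).Nodup
  fst_ne_snd : ∀ p ∈ F, ∀ q ∈ F, p.1 ≠ q.2

-- The position whose entry `exchange` writes at position `k`.
def matchPartner (F : List (ℕ × ℕ)) (k : ℕ) : ℕ :=
  match F.find? (fun p => p.1 == k) with
  | some p => p.2
  | none =>
    match F.find? (fun p => p.2 == k) with
    | some p => p.1
    | none => k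

variable {F : List (ℕ × ℕ)}

theorem IsPairing.matchPartner_fst (hF : IsPairing F) {p : ℕ × ℕ} (hp : p ∈ F) :
    matchPartner F p.1 = p.2 := by
  simp [matchPartner, List.find?_beq_eq_some_of_nodup_map hF.nodup_fst hp]

theorem IsPairing.matchPartner_snd (hF : IsPairing F) {p : ℕ × ℕ} (hp : p ∈ F) :
    matchPartner F p.2 = p.1 := by
  have hnone : F.find? (fun q => q.1 == p.2) = none :=
    List.find?_eq_none.2 fun q hq => by simpa using hF.fst_ne_snd q hq p hp
  simp [matchPartner, hnone, List.find?_beq_eq_some_of_nodup_map hF.nodup_snd hp]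

theorem matchPartner_of_forall_ne {k : ℕ} (hk : ∀ p ∈ F, p.1 ≠ k ∧ p.2 ≠ k) :
    matchPartner F k = k := by
  have h₁ : F.find? (fun p => p.1 == k) = none :=
    List.find?_eq_none.2 fun p hp => by simpa using (hk p hp).1
  have h₂ : F.find? (fun p => p.2 == k) = none :=
    List.find?_eq_none.2 fun p hp => by simpa using (hk p hp).2
  simp [matchPartner, h₁, h₂]

theorem IsPairing.matchPartner_involutive (hF : IsPairing F) :
    Function.Involutive (matchPartner F) := by
  intro k
  by_cases h₁ : ∃ p ∈ F, p.1 = k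
  · obtain ⟨p, hp, rfl⟩ := h₁
    rw [hF.matchPartner_fst hp, hF.matchPartner_snd hp]
  by_cases h₂ : ∃ p ∈ F, p.2 = k
  · obtain ⟨p, hp, rfl⟩ := h₂
    rw [hF.matchPartner_snd hp, hF.matchPartner_fst hp]
  push Not at h₁ h₂
  rw [matchPartner_of_forall_ne fun p hp => ⟨h₁ p hp, h₂ p hp⟩,
    matchPartner_of_forall_ne fun p hp => ⟨h₁ p hp, h₂ p hp⟩]

theorem IsPairing.matchPartner_lt (hF : IsPairing F) {n : ℕ}
    (hn : ∀ p ∈ F, p.1 < n ∧ p.2 < n) {k : ℕ} (hk : k < n) : matchPartner F k < n := by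
  by_cases h₁ : ∃ p ∈ F, p.1 = k
  · obtain ⟨p, hp, rfl⟩ := h₁
    exact hF.matchPartner_fst hp ▸ (hn p hp).2
  by_cases h₂ : ∃ p ∈ F, p.2 = k
  · obtain ⟨p, hp, rfl⟩ := h₂
    exact hF.matchPartner_snd hp ▸ (hn p hp).1
  push Not at h₁ h₂
  rwa [matchPartner_of_forall_ne fun p hp => ⟨h₁ p hp, h₂ p hp⟩]

theorem IsPairing.map_matchPartner_range_perm (hF : IsPairing F) {n : ℕ}
    (hn : ∀ p ∈ F, p.1 < n ∧ p.2 < n) :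
    ((List.range n).map (matchPartner F)).Perm (List.range n) := by
  refine (List.perm_ext_iff_of_nodup
    (List.nodup_range.map hF.matchPartner_involutive.injective) List.nodup_range).2 fun k => ?_
  simp only [List.mem_map, List.mem_range]
  exact ⟨fun ⟨m, hm, hmk⟩ => hmk ▸ hF.matchPartner_lt hn hm,
    fun hk => ⟨matchPartner F k, hF.matchPartner_lt hn hk, hF.matchPartner_involutive k⟩⟩

end Pairing

section Spec

variable {C S : Type*} (R : C → S → Prop)

structure IsFCFSMatching (w : List (C ⊕ S)) (N : ℕ → ℕ → Prop) : Prop where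
  lt : ∀ {i j}, N i j → i < j
  compat : ∀ {i j}, N i j →
    ∃ c s, w[i]? = some (Sum.inl c) ∧ w[j]? = some (Sum.inr s) ∧ R c s
  right_unique : ∀ {i j j'}, N i j → N i j' → j = j'
  left_unique : ∀ {i i' j}, N i j → N i' j → i = i'
  fcfs : ∀ {i j c s}, i < j → w[i]? = some (Sum.inl c) → w[j]? = some (Sum.inr s) →
    R c s → (∃ j' ≤ j, N i j') ∨ (∃ i' ≤ i, N i' j)

variable {R} {w : List (C ⊕ S)}

theorem IsFCFSMatching.snd_lt_length {N : ℕ → ℕ → Prop} (hN : IsFCFSMatching R w N)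
    {i j : ℕ} (h : N i j) : j < w.length := by
  obtain ⟨_, _, _, hj, _⟩ := hN.compat h
  exact (List.getElem?_eq_some_iff.1 hj).1

theorem IsFCFSMatching.imp_of_agree_below {N₁ N₂ : ℕ → ℕ → Prop}
    (h₁ : IsFCFSMatching R w N₁) (h₂ : IsFCFSMatching R w N₂) {j : ℕ}
    (ih : ∀ j' < j, ∀ i, N₁ i j' ↔ N₂ i j') {i : ℕ} (h : N₁ i j) : N₂ i j := by
  obtain ⟨c, s, hc, hs, hR⟩ := h₁.compat h
  rcases h₂.fcfs (h₁.lt h) hc hs hR with ⟨j', hj', h₂'⟩ | ⟨i', hi', h₂'⟩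
  · obtain rfl | hlt := hj'.eq_or_lt
    · exact h₂'
    · exact absurd (h₁.right_unique h ((ih j' hlt i).2 h₂')) hlt.ne'
  · obtain rfl | hlt := hi'.eq_or_lt
    · exact h₂'
    · exfalso
      obtain ⟨c', s', hc', hs', hR'⟩ := h₂.compat h₂'
      obtain rfl : s = s' := by simpa [hs] using hs'
      rcases h₁.fcfs (h₂.lt h₂') hc' hs hR' with
        ⟨j'', hj'', h₁'⟩ | ⟨i'', hi'', h₁'⟩
      · obtain rfl | hlt' := hj''.eq_or_lt
        · exact hlt.ne (h₁.left_unique h₁' h)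
        · exact hlt'.ne (h₂.right_unique ((ih j'' hlt' i').1 h₁') h₂')
      · exact (hi''.trans_lt hlt).ne (h₁.left_unique h₁' h)

theorem IsFCFSMatching.unique {N₁ N₂ : ℕ → ℕ → Prop}
    (h₁ : IsFCFSMatching R w N₁) (h₂ : IsFCFSMatching R w N₂) (i j : ℕ) :
    N₁ i j ↔ N₂ i j := by
  induction j using Nat.strong_induction_on generalizing i with
  | _ j ih =>
    exact ⟨h₁.imp_of_agree_below h₂ ih,
      h₂.imp_of_agree_below h₁ fun j' hj' i => (ih j' hj' i).symm⟩

end Spec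

section Algorithm

variable {C S : Type*} {R : C → S → Prop} {w : List (C ⊕ S)}

structure QueueInv (w : List (C ⊕ S)) (n : ℕ) (q : List (ℕ × C)) : Prop where
  sorted : q.Pairwise (fun a b => a.1 < b.1)
  lt : ∀ x ∈ q, x.1 < n
  entry : ∀ x ∈ q, w[x.1]? = some (Sum.inl x.2)

theorem QueueInv.nil : QueueInv w 0 [] := ⟨.nil, by simp, by simp⟩

theorem QueueInv.sublist {n : ℕ} {q q' : List (ℕ × C)} (hq : QueueInv w n q)
    (h : q'.Sublist q) : QueueInv w n q' :=
  ⟨hq.sorted.sublist h, fun x hx => hq.lt x (h.subset hx), fun x hx => hq.entry x (h.subset hx)⟩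

theorem QueueInv.succ {n : ℕ} {q : List (ℕ × C)} (hq : QueueInv w n q) :
    QueueInv w (n + 1) q :=
  ⟨hq.sorted, fun x hx => (hq.lt x hx).trans n.lt_succ_self, hq.entry⟩

theorem QueueInv.push {n : ℕ} {q : List (ℕ × C)} {c : C} (hq : QueueInv w n q)
    (hn : w[n]? = some (Sum.inl c)) : QueueInv w (n + 1) (q ++ [(n, c)]) := by
  refine ⟨List.pairwise_append.2 ⟨hq.sorted, by simp, ?_⟩, ?_, ?_⟩
  · simpa using fun x hx => hq.lt x hx
  · intro x hx
    rcases List.mem_append.1 hx with hx | hx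
    · exact (hq.lt x hx).trans n.lt_succ_self
    · simp [List.mem_singleton.1 hx]
  · intro x hx
    rcases List.mem_append.1 hx with hx | hx
    · exact hq.entry x hx
    · simpa [List.mem_singleton.1 hx] using hn

/-- What `fcfsAux R (w.drop n) n q` produces: `out` lists the pairs it matches, in the order
of their servers, and it is first-come-first-served for every customer that is waiting in `q`
or arrives at a position `≥ n`. -/
structure AuxSpec (R : C → S → Prop) (w : List (C ⊕ S)) (n : ℕ) (q : List (ℕ × C))
    (out : List (ℕ × ℕ)) : Prop where
  le_snd : ∀ pr ∈ out, n ≤ pr.2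
  fst_lt_snd : ∀ pr ∈ out, pr.1 < pr.2
  fst_waiting : ∀ pr ∈ out, pr.1 ∈ q.map Prod.fst ∨ n ≤ pr.1
  compat : ∀ pr ∈ out,
    ∃ c s, w[pr.1]? = some (Sum.inl c) ∧ w[pr.2]? = some (Sum.inr s) ∧ R c s
  sorted : out.Pairwise (fun a b => a.2 < b.2)
  nodup_fst : (out.map Prod.fst).Nodup
  fcfs : ∀ {i j c s}, i < j → n ≤ j → w[i]? = some (Sum.inl c) →
    w[j]? = some (Sum.inr s) → R c s → i ∈ q.map Prod.fst ∨ n ≤ i →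
    (∃ j' ≤ j, (i, j') ∈ out) ∨ (∃ i' ≤ i, (i', j) ∈ out)

theorem AuxSpec.nil {n : ℕ} {q : List (ℕ × C)} (hn : w.length ≤ n) : AuxSpec R w n q [] := by
  refine ⟨by simp, by simp, by simp, by simp, .nil, .nil, fun {i j c s} _ hj _ hs _ _ => ?_⟩
  rw [List.getElem?_eq_none (hn.trans hj)] at hs
  cases hs

theorem AuxSpec.of_customer {n : ℕ} {q : List (ℕ × C)} {c : C} {out : List (ℕ × ℕ)}
    (hn : w[n]? = some (Sum.inl c)) (h : AuxSpec R w (n + 1) (q ++ [(n, c)]) out) :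
    AuxSpec R w n q out := by
  refine ⟨fun pr hpr => (h.le_snd pr hpr).trans' n.le_succ, h.fst_lt_snd, fun pr hpr => ?_,
    h.compat, h.sorted, h.nodup_fst, fun {i j c' s} hij hj hc hs hR hi => ?_⟩
  · rcases h.fst_waiting pr hpr with hq | hn'
    · simp only [List.map_append, List.mem_append, List.map_cons, List.map_nil,
        List.mem_singleton] at hq
      exact hq.imp_right (·.ge)
    · exact .inr (n.le_succ.trans hn')
  · have hjn : j ≠ n := by rintro rfl; simp [hn] at hs
    refine h.fcfs hij (by omega) hc hs hR ?_
    rcases hi with hi | hi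
    · exact .inl (by simp [hi])
    · obtain rfl | hi := hi.eq_or_lt
      · exact .inl (by simp)
      · exact .inr hi

variable [∀ c s, Decidable (R c s)]

theorem AuxSpec.of_server_unmatched {n : ℕ} {q : List (ℕ × C)} {s : S}
    {out : List (ℕ × ℕ)} (hq : QueueInv w n q) (hn : w[n]? = some (Sum.inr s))
    (hfind : q.find? (fun p => decide (R p.2 s)) = none) (h : AuxSpec R w (n + 1) q out) :
    AuxSpec R w n q out := by
  refine ⟨fun pr hpr => (h.le_snd pr hpr).trans' n.le_succ, h.fst_lt_snd,
    fun pr hpr => (h.fst_waiting pr hpr).imp_right n.le_succ.trans, h.compat, h.sorted,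
    h.nodup_fst, fun {i j c s'} hij hj hc hs hR hi => ?_⟩
  have hin : i ≠ n := by rintro rfl; simp [hn] at hc
  obtain rfl | hj := hj.eq_or_lt
  · obtain rfl : s = s' := by simpa [hn] using hs
    obtain ⟨x, hx, rfl⟩ := List.mem_map.1 (hi.resolve_right (by omega))
    obtain rfl : x.2 = c := by simpa [hq.entry x hx] using hc
    simpa [hR] using List.find?_eq_none.1 hfind x hx
  · exact h.fcfs hij hj hc hs hR (hi.imp_right fun hi => by omega)

theorem AuxSpec.of_server_matched {n : ℕ} {q : List (ℕ × C)} {s : S}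
    {p : ℕ × C} {out : List (ℕ × ℕ)} (hq : QueueInv w n q) (hn : w[n]? = some (Sum.inr s))
    (hfind : q.find? (fun p => decide (R p.2 s)) = some p)
    (h : AuxSpec R w (n + 1) (q.eraseP (fun p => decide (R p.2 s))) out) :
    AuxSpec R w n q ((p.1, n) :: out) := by
  have hp : p ∈ q := List.mem_of_find?_eq_some hfind
  have hpR : R p.2 s := by simpa using List.find?_some hfind
  have herase {i : ℕ} := hq.sorted.mem_map_fst_eraseP hfind (i := i)
  refine ⟨List.forall_mem_cons.2 ⟨le_rfl, fun pr hpr => (h.le_snd pr hpr).trans' n.le_succ⟩,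
    List.forall_mem_cons.2 ⟨hq.lt p hp, h.fst_lt_snd⟩,
    List.forall_mem_cons.2 ⟨.inl (List.mem_map_of_mem hp), fun pr hpr =>
      (h.fst_waiting pr hpr).imp (herase.1 · |>.1) n.le_succ.trans⟩,
    List.forall_mem_cons.2 ⟨⟨p.2, s, hq.entry p hp, hn, hpR⟩, h.compat⟩,
    List.pairwise_cons.2 ⟨fun pr hpr => h.le_snd pr hpr, h.sorted⟩,
    List.nodup_cons.2 ⟨fun hmem => ?_, h.nodup_fst⟩, fun {i j c s'} hij hj hc hs hR hi => ?_⟩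
  · obtain ⟨pr, hpr, hpr1⟩ := List.mem_map.1 hmem
    rcases h.fst_waiting pr hpr with hw | hw
    · exact (herase.1 (hpr1 ▸ hw)).2 rfl
    · have := hq.lt p hp
      omega
  have hin : i ≠ n := by rintro rfl; simp [hn] at hc
  obtain rfl | hj := hj.eq_or_lt
  · obtain rfl : s = s' := by simpa [hn] using hs
    obtain ⟨x, hx, rfl⟩ := List.mem_map.1 (hi.resolve_right (by omega))
    obtain rfl : x.2 = c := by simpa [hq.entry x hx] using hc
    exact .inr ⟨p.1, hq.sorted.fst_le_of_find?_eq_some hfind hx (by simpa using hR),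
      List.mem_cons_self⟩
  · by_cases hip : i = p.1
    · exact .inl ⟨n, hj.le, hip ▸ List.mem_cons_self⟩
    exact (h.fcfs hij hj hc hs hR (hi.imp (fun hi => herase.2 ⟨hi, hip⟩) (by omega))).imp
      (fun ⟨j', hj', hm⟩ => ⟨j', hj', .tail _ hm⟩)
      (fun ⟨i', hi', hm⟩ => ⟨i', hi', .tail _ hm⟩)

theorem auxSpec_fcfsAux : ∀ (rest : List (C ⊕ S)) (n : ℕ) (q : List (ℕ × C)),
    w.drop n = rest → QueueInv w n q → AuxSpec R w n q (fcfsAux R rest n q)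
  | [], _, _, hrest, _ => .nil (List.drop_eq_nil_iff.1 hrest)
  | z :: rest, n, q, hrest, hq => by
    have hn : w[n]? = some z := by rw [← n.add_zero, ← List.getElem?_drop, hrest]; rfl
    have hrest' : w.drop (n + 1) = rest := by rw [← List.tail_drop, hrest, List.tail_cons]
    cases z with
    | inl c => exact .of_customer hn (auxSpec_fcfsAux rest _ _ hrest' (hq.push hn))
    | inr s =>
      rcases hfind : q.find? (fun p => decide (R p.2 s)) with _ | p
      · rw [fcfsAux, hfind]
        exact .of_server_unmatched hq hn hfind (auxSpec_fcfsAux rest _ _ hrest' hq.succ)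
      · rw [fcfsAux, hfind]
        exact .of_server_matched hq hn hfind
          (auxSpec_fcfsAux rest _ _ hrest' (hq.succ.sublist List.eraseP_sublist))

theorem auxSpec_fcfsMatching (w : List (C ⊕ S)) : AuxSpec R w 0 [] (fcfsMatching R w) :=
  auxSpec_fcfsAux w 0 [] rfl .nil

theorem nodup_map_fst_fcfsMatching (w : List (C ⊕ S)) :
    ((fcfsMatching R w).map Prod.fst).Nodup :=
  (auxSpec_fcfsMatching w).nodup_fst

theorem nodup_map_snd_fcfsMatching (w : List (C ⊕ S)) :
    ((fcfsMatching R w).map Prod.snd).Nodup :=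
  List.pairwise_map.2 ((auxSpec_fcfsMatching w).sorted.imp Nat.ne_of_lt)

theorem isFCFSMatching_fcfsMatching (w : List (C ⊕ S)) :
    IsFCFSMatching R w (fun i j => (i, j) ∈ fcfsMatching R w) where
  lt h := (auxSpec_fcfsMatching w).fst_lt_snd _ h
  compat h := (auxSpec_fcfsMatching w).compat _ h
  right_unique h h' := congrArg Prod.snd
    (List.inj_on_of_nodup_map (nodup_map_fst_fcfsMatching w) h h' rfl)
  left_unique h h' := congrArg Prod.fst
    (List.inj_on_of_nodup_map (nodup_map_snd_fcfsMatching w) h h' rfl)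
  fcfs hij hc hs hR :=
    (auxSpec_fcfsMatching w).fcfs hij (Nat.zero_le _) hc hs hR (.inr (Nat.zero_le _))

theorem isPairing_fcfsMatching (w : List (C ⊕ S)) : IsPairing (fcfsMatching R w) where
  nodup_fst := nodup_map_fst_fcfsMatching w
  nodup_snd := nodup_map_snd_fcfsMatching w
  fst_ne_snd p hp q hq heq := by
    obtain ⟨_, _, hc, _, _⟩ := (auxSpec_fcfsMatching w).compat p hp
    obtain ⟨_, _, _, hs, _⟩ := (auxSpec_fcfsMatching w).compat q hq
    simp [heq, hs] at hc

theorem lt_length_of_mem_fcfsMatching {w : List (C ⊕ S)} {p : ℕ × ℕ}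
    (hp : p ∈ fcfsMatching R w) : p.1 < w.length ∧ p.2 < w.length :=
  have hj := (isFCFSMatching_fcfsMatching w).snd_lt_length hp
  ⟨((isFCFSMatching_fcfsMatching w).lt hp).trans hj, hj⟩

end Algorithm

section Perfect
variable {C S : Type*} {R : C → S → Prop} [∀ c s, Decidable (R c s)] {w : List (C ⊕ S)}

theorem mem_findIdxs_isLeft {k : ℕ} :
    k ∈ w.findIdxs Sum.isLeft ↔ ∃ c, w[k]? = some (Sum.inl c) := by
  simp only [List.mem_findIdxs_iff_getElem_sub_pos, Nat.zero_le, Nat.sub_zero, true_and]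
  constructor
  · rintro ⟨hk, hl⟩
    exact ⟨w[k].getLeft hl, by simp [List.getElem?_eq_getElem hk]⟩
  · rintro ⟨c, hc⟩
    obtain ⟨hk, hc⟩ := List.getElem?_eq_some_iff.1 hc
    exact ⟨hk, by simp [hc]⟩

theorem isPerfect_iff_forall_matched :
    IsPerfect R w ↔ ∀ i c, w[i]? = some (Sum.inl c) → ∃ j, (i, j) ∈ fcfsMatching R w := by
  have hsub : ((fcfsMatching R w).map Prod.fst).Subperm (w.findIdxs Sum.isLeft) :=
    (nodup_map_fst_fcfsMatching w).subperm fun i hi => by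
      obtain ⟨pr, hpr, rfl⟩ := List.mem_map.1 hi
      obtain ⟨c, _, hc, _⟩ := (auxSpec_fcfsMatching w).compat pr hpr
      exact mem_findIdxs_isLeft.2 ⟨c, hc⟩
  rw [IsPerfect, numC, ← List.length_findIdxs (s := 0), ← List.length_map (f := Prod.fst)]
  constructor
  · intro h i c hc
    have hi := (hsub.perm_of_length_le h.ge).symm.subset (mem_findIdxs_isLeft.2 ⟨c, hc⟩)
    obtain ⟨pr, hpr, rfl⟩ := List.mem_map.1 hi
    exact ⟨pr.2, hpr⟩
  · intro h
    refine le_antisymm hsub.length_le (List.nodup_findIdxs.subperm fun i hi => ?_).length_le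
    obtain ⟨c, hc⟩ := mem_findIdxs_isLeft.1 hi
    obtain ⟨j, hj⟩ := h i c hc
    exact List.mem_map.2 ⟨(i, j), hj, rfl⟩

end Perfect

structure IsSwapAlong {α : Type*} (N : ℕ → ℕ → Prop) (w v : List α) : Prop where
  length_eq : v.length = w.length
  getElem?_fst : ∀ {i j}, N i j → v[i]? = w[j]?
  getElem?_snd : ∀ {i j}, N i j → v[j]? = w[i]?
  getElem?_of_unmatched : ∀ {k}, (∀ i j, N i j → i ≠ k ∧ j ≠ k) → v[k]? = w[k]?

section Exchange
variable {C S : Type*} {R : C → S → Prop} [∀ c s, Decidable (R c s)] [Inhabited C]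

theorem exchange_eq_map_matchPartner (w : List (C ⊕ S)) :
    exchange R w = (List.range w.length).map
      fun k => w.getD (matchPartner (fcfsMatching R w) k) (Sum.inl default) := by
  refine List.map_congr_left fun k _ => ?_
  rcases h₁ : (fcfsMatching R w).find? (fun p => p.1 == k) with _ | p
  · rcases h₂ : (fcfsMatching R w).find? (fun p => p.2 == k) with _ | p <;>
      simp [matchPartner, h₁, h₂]
  · simp [matchPartner, h₁]

theorem exchange_perm (w : List (C ⊕ S)) : (exchange R w).Perm w := by
  have hperm := ((isPairing_fcfsMatching w).map_matchPartner_range_perm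
    fun _ hp => lt_length_of_mem_fcfsMatching (R := R) hp).map (w.getD · (Sum.inl default))
  rw [List.map_map, List.map_getD_range] at hperm
  rw [exchange_eq_map_matchPartner]
  exact hperm

theorem getElem?_exchange {w : List (C ⊕ S)} {k : ℕ} (hk : k < w.length) :
    (exchange R w)[k]? = w[matchPartner (fcfsMatching R w) k]? := by
  have hm := (isPairing_fcfsMatching w).matchPartner_lt
    (fun _ hp => lt_length_of_mem_fcfsMatching (R := R) hp) hk
  simp [exchange_eq_map_matchPartner, hk, List.getElem?_eq_getElem hm]

theorem isSwapAlong_exchange (w : List (C ⊕ S)) :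
    IsSwapAlong (fun i j => (i, j) ∈ fcfsMatching R w) w (exchange R w) where
  length_eq := by simp [exchange]
  getElem?_fst h := by
    rw [getElem?_exchange (lt_length_of_mem_fcfsMatching h).1,
      (isPairing_fcfsMatching w).matchPartner_fst h]
  getElem?_snd h := by
    rw [getElem?_exchange (lt_length_of_mem_fcfsMatching h).2,
      (isPairing_fcfsMatching w).matchPartner_snd h]
  getElem?_of_unmatched {k} hk := by
    rcases lt_or_ge k w.length with hlt | hge
    · rw [getElem?_exchange hlt, matchPartner_of_forall_ne fun p hp => hk p.1 p.2 hp]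
    · rw [List.getElem?_eq_none hge, List.getElem?_eq_none (by simpa [exchange] using hge)]

end Exchange

section Reflection
variable {C S : Type*} {R : C → S → Prop} {w v : List (C ⊕ S)} {N : ℕ → ℕ → Prop}

theorem IsSwapAlong.getElem?_reverse (hv : IsSwapAlong N w v) {a : ℕ} (ha : a < w.length) :
    v.reverse[a]? = v[w.length - 1 - a]? := by
  rw [List.getElem?_reverse (hv.length_eq ▸ ha), hv.length_eq]

theorem forall_ne_of_not_exists {k : ℕ} (h₁ : ¬∃ j, N k j) (h₂ : ¬∃ i, N i k) :
    ∀ i j, N i j → i ≠ k ∧ j ≠ k := by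
  rintro i j hij
  exact ⟨by rintro rfl; exact h₁ ⟨j, hij⟩, by rintro rfl; exact h₂ ⟨i, hij⟩⟩

theorem IsSwapAlong.exists_of_getElem?_eq_inl (hN : IsFCFSMatching R w N)
    (hperf : ∀ i c, w[i]? = some (Sum.inl c) → ∃ j, N i j) (hv : IsSwapAlong N w v)
    {k : ℕ} {c : C} (h : v[k]? = some (Sum.inl c)) :
    ∃ i, N i k ∧ w[i]? = some (Sum.inl c) := by
  by_cases h₁ : ∃ j, N k j
  · obtain ⟨j, hkj⟩ := h₁
    obtain ⟨_, _, _, hs, _⟩ := hN.compat hkj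
    simp [hv.getElem?_fst hkj, hs] at h
  by_cases h₂ : ∃ i, N i k
  · obtain ⟨i, hik⟩ := h₂
    exact ⟨i, hik, hv.getElem?_snd hik ▸ h⟩
  rw [hv.getElem?_of_unmatched (forall_ne_of_not_exists h₁ h₂)] at h
  exact absurd (hperf k c h) h₁

theorem IsSwapAlong.getElem?_eq_inr (hN : IsFCFSMatching R w N) (hv : IsSwapAlong N w v)
    {k : ℕ} {s : S} (h : v[k]? = some (Sum.inr s)) :
    (∃ j, N k j ∧ w[j]? = some (Sum.inr s)) ∨
      ((∀ i j, N i j → i ≠ k ∧ j ≠ k) ∧ w[k]? = some (Sum.inr s)) := by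
  by_cases h₁ : ∃ j, N k j
  · obtain ⟨j, hkj⟩ := h₁
    exact .inl ⟨j, hkj, hv.getElem?_fst hkj ▸ h⟩
  by_cases h₂ : ∃ i, N i k
  · obtain ⟨i, hik⟩ := h₂
    obtain ⟨_, _, hc, _, _⟩ := hN.compat hik
    simp [hv.getElem?_snd hik, hc] at h
  have hun := forall_ne_of_not_exists h₁ h₂
  exact .inr ⟨hun, hv.getElem?_of_unmatched hun ▸ h⟩

theorem IsFCFSMatching.reverse_of_isSwapAlong (hN : IsFCFSMatching R w N)
    (hperf : ∀ i c, w[i]? = some (Sum.inl c) → ∃ j, N i j) (hv : IsSwapAlong N w v) :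
    IsFCFSMatching R v.reverse
      (fun a b => a < w.length ∧ b < w.length ∧ N (w.length - 1 - b) (w.length - 1 - a)) where
  lt := fun ⟨ha, hb, h⟩ => by have := hN.lt h; omega
  compat := fun ⟨ha, hb, h⟩ => by
    obtain ⟨c, s, hc, hs, hR⟩ := hN.compat h
    exact ⟨c, s, by rw [hv.getElem?_reverse ha, hv.getElem?_snd h, hc],
      by rw [hv.getElem?_reverse hb, hv.getElem?_fst h, hs], hR⟩
  right_unique := fun ⟨_, hb, h⟩ ⟨_, hb', h'⟩ => by have := hN.left_unique h h'; omega
  left_unique := fun ⟨ha, _, h⟩ ⟨ha', _, h'⟩ => by have := hN.right_unique h h'; omega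
  fcfs {a b c s} hab hc hs hR := by
    set M := w.length
    have hb : b < M := by simpa [hv.length_eq] using (List.getElem?_eq_some_iff.1 hs).1
    rw [hv.getElem?_reverse (hab.trans hb)] at hc
    rw [hv.getElem?_reverse hb] at hs
    obtain ⟨i, hi, hic⟩ := hv.exists_of_getElem?_eq_inl hN hperf hc
    have hiM := hN.lt hi
    have hleft :
        M - 1 - b ≤ i → ∃ b' ≤ b, a < M ∧ b' < M ∧ N (M - 1 - b') (M - 1 - a) :=
      fun hle => ⟨M - 1 - i, by omega, by omega, by omega,
        by rwa [show M - 1 - (M - 1 - i) = i by omega]⟩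
    rcases hv.getElem?_eq_inr hN hs with ⟨j, hj, hjs⟩ | ⟨hun, hks⟩
    · by_cases h₁ : M - 1 - b ≤ i
      · exact .inl (hleft h₁)
      by_cases h₂ : M - 1 - a ≤ j
      · have hjM := hN.snd_lt_length hj
        exact .inr ⟨M - 1 - j, by omega, by omega, hb,
          by rwa [show M - 1 - (M - 1 - j) = j by omega]⟩
      exfalso
      rcases hN.fcfs ((not_le.1 h₁).trans (hN.lt hj)) hic hjs hR with
        ⟨j', hj', h'⟩ | ⟨i', hi', h'⟩
      · have := hN.right_unique hi h'; omega
      · have := hN.left_unique hj h'; omega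
    · refine .inl (hleft (le_of_lt (lt_of_not_ge fun hle => ?_)))
      obtain rfl | hlt := hle.eq_or_lt
      · exact (hun _ _ hi).1 rfl
      rcases hN.fcfs hlt hic hks hR with ⟨j', hj', h'⟩ | ⟨i', _, h'⟩
      · have := hN.right_unique hi h'; omega
      · exact (hun _ _ h').2 rfl

end Reflection

theorem IsPerfect.exchange_reverse {C S : Type*} {R : C → S → Prop} [∀ c s, Decidable (R c s)]
    [Inhabited C] {w : List (C ⊕ S)} (hw : IsPerfect R w) :
    IsPerfect R (exchange R w).reverse := by
  have hN := isFCFSMatching_fcfsMatching (R := R) w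
  have hperf := isPerfect_iff_forall_matched.1 hw
  have hv := isSwapAlong_exchange (R := R) w
  have hrefl := (isFCFSMatching_fcfsMatching _).unique (hN.reverse_of_isSwapAlong hperf hv)
  refine isPerfect_iff_forall_matched.2 fun a c hc => ?_
  have ha : a < w.length := by simpa [hv.length_eq] using (List.getElem?_eq_some_iff.1 hc).1
  rw [hv.getElem?_reverse ha] at hc
  obtain ⟨i, hi, -⟩ := hv.exists_of_getElem?_eq_inl hN hperf hc
  have hiM := hN.lt hi
  refine ⟨w.length - 1 - i, (hrefl _ _).2 ⟨ha, by omega, ?_⟩⟩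
  rwa [show w.length - 1 - (w.length - 1 - i) = i by omega]

-- `List.count` on sums uses the derived `BEq`, the big-operator lemmas the `DecidableEq` one.
theorem Sum.instBEq_eq_instBEqOfDecidableEq {α β : Type*} [DecidableEq α] [DecidableEq β] :
    (Sum.instBEq : BEq (α ⊕ β)) = instBEqOfDecidableEq := by
  ext a b
  cases a <;> cases b <;> simp [BEq.beq, Sum.instBEq.beq]

theorem List.prod_map_eq_prod_pow_count {ι M : Type*} [Fintype ι] [DecidableEq ι]
    [CommMonoid M] (l : List ι) (f : ι → M) : (l.map f).prod = ∏ i, f i ^ l.count i := by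
  rw [Finset.prod_list_map_count]
  exact Finset.prod_subset (Finset.subset_univ _) fun i _ hi => by
    rw [List.count_eq_zero_of_not_mem (by simpa using hi), pow_zero]

theorem stmt12_general {C S : Type*} [Fintype C] [Fintype S]
    [Inhabited C] [DecidableEq C] [DecidableEq S]
    (R : C → S → Prop) [∀ c s, Decidable (R c s)]
    (w : List (C ⊕ S)) (hw : IsPerfect R w) :
    IsPerfect R (exchange R w).reverse ∧
    (∀ x : C ⊕ S, ((exchange R w).reverse).count x = w.count x) ∧
    (∀ p : C ⊕ S → ℝ, (∀ x, 0 ≤ p x ∧ p x ≤ 1) →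
      (((exchange R w).reverse).map p).prod = (w.map p).prod ∧
      (w.map p).prod =
        (∏ c : C, p (Sum.inl c) ^ w.count (Sum.inl c)) *
          (∏ s : S, p (Sum.inr s) ^ w.count (Sum.inr s))) := by
  have hperm : ((exchange R w).reverse).Perm w := (List.reverse_perm _).trans (exchange_perm w)
  refine ⟨hw.exchange_reverse, hperm.count_eq, fun p _ => ⟨(hperm.map p).prod_eq, ?_⟩⟩
  rw [List.prod_map_eq_prod_pow_count, Fintype.prod_sum_type, Sum.instBEq_eq_instBEqOfDecidableEq]

/-- if `w` is a perfect block then its exchanged-reversed word is again a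
perfect block with the same multiset of entries, so for every probability assignment
`p : 𝒞 ∪ 𝒮 → [0,1]` the two blocks have the same product probability, namely
`∏_{c} p(c)^{#c} · ∏_{s} p(s)^{#s}` (hence, for i.i.d. entries with `P(c)=α_c`,
`P(s)=β_s`, a perfect block and its exchanged-reversed block are equally likely, and
conditionally on being a perfect block of length `M` the probability is
`κ_M · ∏ α_c^{#c} · ∏ β_s^{#s}`). -/
theorem stmt12 {C S : Type*} [Fintype C] [Fintype S] [Nonempty C] [Nonempty S]
    [Inhabited C] [DecidableEq C] [DecidableEq S]
    (R : C → S → Prop) [∀ c s, Decidable (R c s)]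
    (w : List (C ⊕ S)) (hw : IsPerfect R w) :
    IsPerfect R (exchange R w).reverse ∧
    (∀ x : C ⊕ S, ((exchange R w).reverse).count x = w.count x) ∧
    (∀ p : C ⊕ S → ℝ, (∀ x, 0 ≤ p x ∧ p x ≤ 1) →
      (((exchange R w).reverse).map p).prod = (w.map p).prod ∧
      (w.map p).prod =
        (∏ c : C, p (Sum.inl c) ^ w.count (Sum.inl c)) *
          (∏ s : S, p (Sum.inr s) ^ w.count (Sum.inr s))) :=
  stmt12_general R w hw
end

section
/- (Stochastic dominance for the N-system) Suppose the events z^1, z^2, … driving the N-system are i.i.d. with P(z^n = a1) = λ_1/Σ, P(z^n = a2) = λ_2/Σ, P(z^n = p1) = μ_1/Σ, P(z^n = p2) = μ_2/Σ, where λ_1, λ_2, μ_1, μ_2 > 0 and Σ = λ_1+λ_2+μ_1+μ_2. Let N^q(T) and N^r(T) be the total numbers of customers just after event T in the FCFS-ALIS system and in the redundancy system respectively, each started empty (each system may be driven by its own copy of such an i.i.d. sequence). Then for every T, the total number under redundancy service stochastically dominates the total number under FCFS-ALIS minus one: for every integer k, P(N^q(T) ≥ k) ≤ P(N^r(T) ≥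 k − 1). -/
/-!
Couple the two systems by driving them with the same event sequence. Along every path the
FCFS-ALIS waiting queue stays a sublist of the redundancy list: arrivals are appended to both, and
a completion at server `j` erases from each the first customer compatible with `j` (`List.eraseP`
is monotone for sublists). Together with the fact that no waiting customer is compatible with an
idle server, this shows that `N^q ≤ N^r + 1` is preserved by every event. The two laws agree on
all finite-dimensional cylinders, hence are equal, so the pathwise inclusion of events gives the
inequality of probabilities.
-/

/-- Customer types of the `N`-system: type-1 customers can be served by both servers,
type-2 customers only by server 2. -/
inductive CT : Type
  | one : CT
  | two : CT
  deriving DecidableEq, Inhabited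

/-- Events driving the coupled `N`-systems: `a1`, `a2` are arrivals of type-1 and type-2
customers; `p1`, `p2` are potential service completions at server 1 and server 2. -/
inductive Ev : Type
  | a1 : Ev
  | a2 : Ev
  | p1 : Ev
  | p2 : Ev
  deriving DecidableEq, Inhabited

/-! ### System-r (redundancy): the state is the list of customers present, ordered by
arrival; each customer is recorded as (arrival event index, type).  Server 2 serves the
first customer of the list, server 1 serves the first type-1 customer of the list. -/

/-- One transition of the redundancy system; `n` is the index of the current event. -/
def rstep (st : List (ℕ × CT)) (n : ℕ) : Ev → List (ℕ × CT)
  | Ev.a1 => st ++ [(n, CT.one)]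
  | Ev.a2 => st ++ [(n, CT.two)]
  | Ev.p2 => st.tail
  | Ev.p1 => st.eraseP (fun p => p.2 == CT.one)

/-- The redundancy system started empty and driven by the events `z 1, z 2, …`. -/
def rrun (z : ℕ → Ev) : ℕ → List (ℕ × CT)
  | 0 => []
  | T + 1 => rstep (rrun z T) (T + 1) (z (T + 1))

/-- The waiting queue of the redundancy system: the customers not currently in service
(the head is served by server 2; the first type-1 customer is served by server 1). -/
def rWaiting : List (ℕ × CT) → List (ℕ × CT)
  | [] => []
  | x :: rest => if x.2 = CT.one then rest else rest.eraseP (fun p => p.2 == CT.one)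

/-- Location of customer `n` in the redundancy system: `0` if in service at the head,
`j ≥ 1` if in the `j`-th waiting position, `−1` if not present (departed). -/
def rloc (st : List (ℕ × CT)) (n : ℕ) : ℤ :=
  match st with
  | [] => -1
  | x :: _ =>
    if x.1 = n then 0
    else
      match (rWaiting st).findIdx? (fun p => p.1 == n) with
      | some i => (i : ℤ) + 1
      | none => -1

/-! ### System-q (FCFS-ALIS): servers are indexed by `Fin 2` (`0` = server 1, `1` =
server 2); server 1 is compatible only with type-1 customers. -/

/-- State of the FCFS-ALIS system: the customer in service at each server, the FCFS
queue of waiting customers, and the ordered list of idle servers (longest idle first). -/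
structure QState : Type where
  serving : Fin 2 → Option (ℕ × CT)
  queue : List (ℕ × CT)
  idle : List (Fin 2)

/-- Server `j` is compatible with customer type `t` (server 2 with all, server 1 only
with type 1). -/
def qCompat (j : Fin 2) (t : CT) : Bool := j == 1 || t == CT.one

/-- Arrival in the FCFS-ALIS system: the customer enters service at the longest idle
compatible server if there is one, and otherwise joins the end of the queue. -/
def qArr (st : QState) (cust : ℕ × CT) : QState :=
  match st.idle.find? (fun j => qCompat j cust.2) with
  | some j =>
      { serving := fun i => if i = j then some cust else st.serving i,
        queue := st.queue,
        idle := st.idle.erase j }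
  | none => { st with queue := st.queue ++ [cust] }

/-- Potential service completion at server `j` in the FCFS-ALIS system: if `j` is busy,
its customer departs and `j` picks the first compatible waiting customer, joining the
end of the idle list if there is none; if `j` is idle nothing changes. -/
def qDep (st : QState) (j : Fin 2) : QState :=
  match st.serving j with
  | none => st
  | some _ =>
      match st.queue.find? (fun p => qCompat j p.2) with
      | some cust =>
          { serving := fun i => if i = j then some cust else st.serving i,
            queue := st.queue.eraseP (fun p => qCompat j p.2),
            idle := st.idle }
      | none =>
          { serving := fun i => if i = j then none else st.serving i,
            queue := st.queue,
            idle := st.idle ++ [j] }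

/-- One transition of the FCFS-ALIS system; `n` is the index of the current event. -/
def qstep (st : QState) (n : ℕ) : Ev → QState
  | Ev.a1 => qArr st (n, CT.one)
  | Ev.a2 => qArr st (n, CT.two)
  | Ev.p1 => qDep st 0
  | Ev.p2 => qDep st 1

/-- The FCFS-ALIS system started empty (both servers idle) and driven by the events
`z 1, z 2, …`. -/
def qrun (z : ℕ → Ev) : ℕ → QState
  | 0 => ⟨fun _ => none, [], [0, 1]⟩
  | T + 1 => qstep (qrun z T) (T + 1) (z (T + 1))

/-- Location of customer `n` in the FCFS-ALIS system: `0` if in service at server 2,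
`j ≥ 1` if in the `j`-th waiting position, `−1` if not present (departed). -/
def qloc (st : QState) (n : ℕ) : ℤ :=
  if (st.serving 1).any (fun p => p.1 == n) then 0
  else
    match st.queue.findIdx? (fun p => p.1 == n) with
    | some i => (i : ℤ) + 1
    | none => -1

/-- Total number of customers present in the FCFS-ALIS system. -/
def qcount (st : QState) : ℕ :=
  st.queue.length + (st.serving 0).toList.length + (st.serving 1).toList.length

instance : MeasurableSpace Ev := ⊤

open MeasureTheory

/-- The one-step probability of each event: `λ_1/Σ, λ_2/Σ, μ_1/Σ, μ_2/Σ` with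
`Σ = λ_1+λ_2+μ_1+μ_2`. -/
noncomputable def evProb (lam1 lam2 mu1 mu2 : ℝ) : Ev → ENNReal
  | Ev.a1 => ENNReal.ofReal (lam1 / (lam1 + lam2 + mu1 + mu2))
  | Ev.a2 => ENNReal.ofReal (lam2 / (lam1 + lam2 + mu1 + mu2))
  | Ev.p1 => ENNReal.ofReal (mu1 / (lam1 + lam2 + mu1 + mu2))
  | Ev.p2 => ENNReal.ofReal (mu2 / (lam1 + lam2 + mu1 + mu2))

lemma rstep_p1 (l : List (ℕ × CT)) (n : ℕ) :
    rstep l n Ev.p1 = l.eraseP fun c => qCompat 0 c.2 :=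
  rfl

lemma rstep_p2 (l : List (ℕ × CT)) (n : ℕ) :
    rstep l n Ev.p2 = l.eraseP fun c => qCompat 1 c.2 := by
  cases l <;> rfl

/- The waiting queue can contain the head of the redundancy list, so the count bound does not
follow from the sublist relation and has to be carried along. -/
structure Coupled (st : QState) (l : List (ℕ × CT)) : Prop where
  queue_sublist : st.queue.Sublist l
  not_compat_of_idle : ∀ j, st.serving j = none → ∀ c ∈ st.queue, qCompat j c.2 = false
  mem_idle_iff : ∀ j, j ∈ st.idle ↔ st.serving j = none
  idle_nodup : st.idle.Nodup
  qcount_le : qcount st ≤ l.length + 1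

lemma qcount_le_of_serving_eq_none {st : QState} {j : Fin 2} (hj : st.serving j = none) :
    qcount st ≤ st.queue.length + 1 := by
  have h0 : (st.serving 0).toList.length ≤ 1 := by cases st.serving 0 <;> simp
  have h1 : (st.serving 1).toList.length ≤ 1 := by cases st.serving 1 <;> simp
  fin_cases j <;> simp_all [qcount]

lemma qcount_mk_update (st : QState) (j : Fin 2) (o : Option (ℕ × CT)) (q : List (ℕ × CT))
    (idle : List (Fin 2)) :
    qcount ⟨fun i => if i = j then o else st.serving i, q, idle⟩ + st.queue.length
      + (st.serving j).toList.length = qcount st + q.length + o.toList.length := by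
  fin_cases j <;> simp [qcount] <;> omega

lemma mem_idle_update_iff {st : QState} {j : Fin 2} {o : Option (ℕ × CT)} {idle : List (Fin 2)}
    (h : ∀ i, i ∈ st.idle ↔ st.serving i = none) (hj : j ∈ idle ↔ o = none)
    (hidle : ∀ i ≠ j, i ∈ idle ↔ i ∈ st.idle) (i : Fin 2) :
    i ∈ idle ↔ (if i = j then o else st.serving i) = none := by
  by_cases hij : i = j
  · subst hij; simpa using hj
  · simpa [hij] using (hidle i hij).trans (h i)

namespace Coupled

variable {st : QState} {l : List (ℕ × CT)}

lemma arrival (h : Coupled st l) (c : ℕ × CT) : Coupled (qArr st c) (l ++ [c]) := by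
  unfold qArr
  rcases hfind : st.idle.find? (fun j => qCompat j c.2) with _ | j
  · have hbusy : ∀ j, st.serving j = none → qCompat j c.2 = false := fun j hj =>
      by simpa using List.find?_eq_none.mp hfind j ((h.mem_idle_iff j).mpr hj)
    refine ⟨h.queue_sublist.append (List.Sublist.refl _), fun j hj d hd => ?_, h.mem_idle_iff,
      h.idle_nodup, ?_⟩
    · rcases List.mem_append.mp hd with hd | hd
      · exact h.not_compat_of_idle j hj d hd
      · rw [List.mem_singleton.mp hd]; exact hbusy j hj
    · have := h.qcount_le
      simp only [qcount, List.length_append, List.length_singleton] at this ⊢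
      omega
  · have hidle : st.serving j = none := (h.mem_idle_iff j).mp (List.mem_of_find?_eq_some hfind)
    refine ⟨h.queue_sublist.trans (List.sublist_append_left _ _), fun i hi d hd => ?_,
      mem_idle_update_iff h.mem_idle_iff (by simpa using h.idle_nodup.not_mem_erase)
        (fun i hij => h.idle_nodup.mem_erase_iff.trans (and_iff_right hij)),
      h.idle_nodup.erase j, ?_⟩
    · by_cases hij : i = j
      · simp [hij] at hi
      · exact h.not_compat_of_idle i (by simpa [hij] using hi) d hd
    · have := qcount_mk_update st j (some c) st.queue (st.idle.erase j)
      have := h.qcount_le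
      simp only [hidle, Option.toList_some, Option.toList_none, List.length_cons,
        List.length_nil, List.length_append] at *
      omega

lemma sublist_eraseP_of_forall_not_compat (h : Coupled st l) {j : Fin 2}
    (hq : ∀ d ∈ st.queue, qCompat j d.2 = false) :
    st.queue.Sublist (l.eraseP fun c => qCompat j c.2) := by
  have := h.queue_sublist.eraseP (p := fun c => qCompat j c.2)
  rwa [List.eraseP_of_forall_not (fun d hd => by simp [hq d hd])] at this

lemma serve_next (h : Coupled st l) {j : Fin 2} {c₀ c : ℕ × CT} (hj : st.serving j = some c₀)
    (hc : c ∈ st.queue) (hpc : qCompat j c.2 = true) :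
    Coupled ⟨fun i => if i = j then some c else st.serving i,
      st.queue.eraseP fun d => qCompat j d.2, st.idle⟩ (l.eraseP fun d => qCompat j d.2) := by
  have hj_idle : j ∉ st.idle := fun hm => by simp [(h.mem_idle_iff j).mp hm] at hj
  refine ⟨h.queue_sublist.eraseP, fun i hi d hd => ?_,
    mem_idle_update_iff h.mem_idle_iff (by simpa using hj_idle) (fun _ _ => Iff.rfl),
    h.idle_nodup, ?_⟩
  · have hij : i ≠ j := by rintro rfl; simp at hi
    exact h.not_compat_of_idle i (by simpa [hij] using hi) d (List.mem_of_mem_eraseP hd)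
  · have := qcount_mk_update st j (some c) (st.queue.eraseP fun d => qCompat j d.2) st.idle
    have := List.length_eraseP_of_mem (p := fun d : ℕ × CT => qCompat j d.2) hc hpc
    have := List.length_eraseP_of_mem (p := fun d : ℕ × CT => qCompat j d.2)
      (h.queue_sublist.subset hc) hpc
    have := List.length_pos_of_mem hc
    have := h.qcount_le
    simp only [hj, Option.toList_some, List.length_singleton] at *
    omega

lemma become_idle (h : Coupled st l) {j : Fin 2} {c₀ : ℕ × CT} (hj : st.serving j = some c₀)
    (hq : ∀ d ∈ st.queue, qCompat j d.2 = false) :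
    Coupled ⟨fun i => if i = j then none else st.serving i, st.queue, st.idle ++ [j]⟩
      (l.eraseP fun d => qCompat j d.2) := by
  have hj_idle : j ∉ st.idle := fun hm => by simp [(h.mem_idle_iff j).mp hm] at hj
  have hsub := h.sublist_eraseP_of_forall_not_compat hq
  refine ⟨hsub, fun i hi d hd => ?_,
    mem_idle_update_iff h.mem_idle_iff (by simp) (fun i hij => by simp [hij]),
    h.idle_nodup.append (List.nodup_singleton j) (by simpa using hj_idle), ?_⟩
  · by_cases hij : i = j
    · subst hij; exact hq d hd
    · exact h.not_compat_of_idle i (by simpa [hij] using hi) d hd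
  · have := hsub.length_le
    have := qcount_le_of_serving_eq_none (st := ⟨fun i => if i = j then none else st.serving i,
      st.queue, st.idle ++ [j]⟩) (j := j) (by simp)
    simp only at this
    omega

lemma departure (h : Coupled st l) (j : Fin 2) :
    Coupled (qDep st j) (l.eraseP fun c => qCompat j c.2) := by
  unfold qDep
  split
  next hj =>
    have hsub := h.sublist_eraseP_of_forall_not_compat (h.not_compat_of_idle j hj)
    refine ⟨hsub, h.not_compat_of_idle, h.mem_idle_iff, h.idle_nodup, ?_⟩
    have := hsub.length_le
    have := qcount_le_of_serving_eq_none hj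
    omega
  next hj =>
    split
    next c hfind =>
      exact h.serve_next hj (List.mem_of_find?_eq_some hfind)
        (List.find?_some (p := fun d : ℕ × CT => qCompat j d.2) hfind)
    next hfind =>
      exact h.become_idle hj (by simpa using List.find?_eq_none.mp hfind)

lemma step (h : Coupled st l) (n : ℕ) (e : Ev) :
    Coupled (qstep st n e) (rstep l n e) := by
  cases e
  · exact h.arrival _
  · exact h.arrival _
  · rw [rstep_p1]; exact h.departure 0
  · rw [rstep_p2]; exact h.departure 1

end Coupled

lemma coupled_run (z : ℕ → Ev) (T : ℕ) : Coupled (qrun z T) (rrun z T) := by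
  induction T with
  | zero =>
    refine ⟨List.Sublist.slnil, fun _ _ _ => by simp [qrun], fun j => ?_, by simp [qrun],
      by simp [qrun, qcount]⟩
    fin_cases j <;> simp [qrun]
  | succ T ih => exact ih.step _ _

lemma qcount_qrun_le (z : ℕ → Ev) (T : ℕ) : qcount (qrun z T) ≤ (rrun z T).length + 1 :=
  (coupled_run z T).qcount_le

namespace MeasureTheory

def pointCylinders (ι α : Type*) : Set (Set (ι → α)) :=
  {S | ∃ (I : Finset ι) (v : ι → α), {z | ∀ i ∈ I, z i = v i} = S}

lemma isPiSystem_pointCylinders (ι α : Type*) : IsPiSystem (pointCylinders ι α) := by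
  classical
  rintro _ ⟨I, v, rfl⟩ _ ⟨J, w, rfl⟩ ⟨x, hxv, hxw⟩
  refine ⟨I ∪ J, x, Set.ext fun z => ?_⟩
  simp only [Set.mem_ofPred_eq, Set.mem_inter_iff, Finset.mem_union] at hxv hxw ⊢
  constructor
  · intro hz
    exact ⟨fun i hi => (hz i (.inl hi)).trans (hxv i hi),
      fun i hi => (hz i (.inr hi)).trans (hxw i hi)⟩
  · rintro ⟨hzv, hzw⟩ i (hi | hi)
    exacts [(hzv i hi).trans (hxv i hi).symm, (hzw i hi).trans (hxw i hi).symm]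

lemma generateFrom_pointCylinders (ι α : Type*) [MeasurableSpace α] [Countable α]
    [MeasurableSingletonClass α] :
    MeasurableSpace.generateFrom (pointCylinders ι α) = MeasurableSpace.pi := by
  apply le_antisymm
  · refine MeasurableSpace.generateFrom_le ?_
    rintro _ ⟨I, v, rfl⟩
    have : {z : ι → α | ∀ i ∈ I, z i = v i} = ⋂ i ∈ I, (fun z => z i) ⁻¹' {v i} := by
      ext; simp
    exact this ▸ I.measurableSet_biInter fun i _ =>
      measurable_pi_apply i (measurableSet_singleton _)
  · rw [MeasurableSpace.pi_eq_generateFrom_projections]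
    refine MeasurableSpace.generateFrom_le ?_
    rintro _ ⟨i, A, -, rfl⟩
    have : Function.eval i ⁻¹' A =
        ⋃ a ∈ A, {z : ι → α | ∀ j ∈ ({i} : Finset ι), z j = a} := by
      ext; simp
    exact this ▸ MeasurableSet.biUnion A.to_countable
      fun a _ => MeasurableSpace.measurableSet_generateFrom ⟨{i}, fun _ => a, rfl⟩

theorem Measure.ext_of_pointCylinders {ι α : Type*} [MeasurableSpace α] [Countable α]
    [MeasurableSingletonClass α] {μ ν : Measure (ι → α)} [IsFiniteMeasure μ]
    (h : ∀ (I : Finset ι) (v : ι → α),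
      μ {z | ∀ i ∈ I, z i = v i} = ν {z | ∀ i ∈ I, z i = v i}) :
    μ = ν := by
  rcases isEmpty_or_nonempty (ι → α) with _ | hne
  · exact Subsingleton.elim μ ν
  obtain ⟨v⟩ := hne
  refine ext_of_generate_finite _ (generateFrom_pointCylinders ι α).symm
    (isPiSystem_pointCylinders ι α) ?_ (by simpa using h ∅ v)
  rintro _ ⟨I, v, rfl⟩
  exact h I v

end MeasureTheory

instance : Fintype Ev :=
  ⟨⟨{Ev.a1, Ev.a2, Ev.p1, Ev.p2}, by decide⟩, fun e => by cases e <;> decide⟩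

instance : MeasurableSingletonClass Ev :=
  ⟨fun _ => MeasurableSpace.measurableSet_top⟩

theorem stmt16_general (lam1 lam2 mu1 mu2 : ℝ)
    (P Q : Measure (ℕ → Ev)) [IsProbabilityMeasure P]
    (hP : ∀ (I : Finset ℕ) (v : ℕ → Ev),
      P {z | ∀ i ∈ I, z i = v i} = ∏ i ∈ I, evProb lam1 lam2 mu1 mu2 (v i))
    (hQ : ∀ (I : Finset ℕ) (v : ℕ → Ev),
      Q {z | ∀ i ∈ I, z i = v i} = ∏ i ∈ I, evProb lam1 lam2 mu1 mu2 (v i)) :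
    ∀ (T : ℕ) (k : ℤ),
      P {z | k ≤ (qcount (qrun z T) : ℤ)} ≤ Q {z | k - 1 ≤ ((rrun z T).length : ℤ)} := by
  intro T k
  obtain rfl : P = Q := Measure.ext_of_pointCylinders fun I v => (hP I v).trans (hQ I v).symm
  refine measure_mono fun z (hz : k ≤ _) => ?_
  have := qcount_qrun_le z T
  change k - 1 ≤ _
  omega

/-- Stochastic dominance for the `N`-system: if each system is started
empty and driven by its own i.i.d. event sequence with the probabilities above, then for
every `T` and every integer `k`,
`P(N^q(T) ≥ k) ≤ Q(N^r(T) ≥ k − 1)`. -/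
theorem stmt16 (lam1 lam2 mu1 mu2 : ℝ)
    (hl1 : 0 < lam1) (hl2 : 0 < lam2) (hm1 : 0 < mu1) (hm2 : 0 < mu2)
    (P Q : Measure (ℕ → Ev)) [IsProbabilityMeasure P] [IsProbabilityMeasure Q]
    (hP : ∀ (I : Finset ℕ) (v : ℕ → Ev),
      P {z | ∀ i ∈ I, z i = v i} = ∏ i ∈ I, evProb lam1 lam2 mu1 mu2 (v i))
    (hQ : ∀ (I : Finset ℕ) (v : ℕ → Ev),
      Q {z | ∀ i ∈ I, z i = v i} = ∏ i ∈ I, evProb lam1 lam2 mu1 mu2 (v i)) :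
    ∀ (T : ℕ) (k : ℤ),
      P {z | k ≤ (qcount (qrun z T) : ℤ)} ≤ Q {z | k - 1 ≤ ((rrun z T).length : ℤ)} :=
  stmt16_general lam1 lam2 mu1 mu2 P Q hP hQ
end
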